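/- arXiv:2206.15018 — 12 statements merged into one kernel-verified Lean document; each statement's English description precedes it below -/
import Mathlib

section
/- Let M = [[A, B], [C, D]] be a partitioned real matrix. If the column space of B is contained in the column space of A and the column space of C^T is contained in the column space of A^T, then rank(M) = rank(A) + rank(D - C A⁺ B), where A⁺ is the Moore–Penrose pseudoinverse of A. -/
/-!
If `A P A = A` and the column spaces of `B` and `Cᵀ` lie in those of `A` and `Aᵀ`, then
`A P B = B` and `C P A = C`, and these two identities give the block factorization
`[[A, B], [C, D]] = [[1, 0], [C P, 1]] * [[A, 0], [0, D - C P B]] * [[1, P B], [0, 1]]`.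
The outer factors are unitriangular, so the rank is that of the block-diagonal middle factor.
-/

open Matrix

/-- `P` is the Moore–Penrose pseudoinverse of `A` (the four Penrose conditions). -/
def IsMPInv {m n : ℕ} (A : Matrix (Fin m) (Fin n) ℝ) (P : Matrix (Fin n) (Fin m) ℝ) : Prop :=
  A * P * A = A ∧ P * A * P = P ∧ (A * P)ᵀ = A * P ∧ (P * A)ᵀ = P * A

namespace Submodule

variable {K M N : Type*} [Semiring K] [AddCommMonoid M] [AddCommMonoid N] [Module K M]
  [Module K N]

def prodEquiv (S : Submodule K M) (T : Submodule K N) : ↥(S.prod T) ≃ₗ[K] ↥S × ↥T where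
  toFun x := (⟨x.1.1, x.2.1⟩, ⟨x.1.2, x.2.2⟩)
  invFun y := ⟨(y.1.1, y.2.1), y.1.2, y.2.2⟩
  map_add' _ _ := rfl
  map_smul' _ _ := rfl
  left_inv _ := rfl
  right_inv _ := rfl

end Submodule

namespace Matrix

section Ring

variable {R : Type*} [Ring R] {l m n o : Type*} [Fintype l] [Fintype m] [Fintype n]
  [Fintype o] [DecidableEq l] [DecidableEq m] [DecidableEq n] [DecidableEq o]

theorem fromBlocks_eq_mul_mul_of_mul_mul_eq {A : Matrix m n R} {B : Matrix m o R}
    {C : Matrix l n R} (D : Matrix l o R) {P : Matrix n m R} (hB : A * P * B = B)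
    (hC : C * P * A = C) :
    fromBlocks A B C D =
      (fromBlocks 1 0 (C * P) 1 : Matrix (m ⊕ l) (m ⊕ l) R) * fromBlocks A 0 0 (D - C * P * B) *
        (fromBlocks 1 (P * B) 0 1 : Matrix (n ⊕ o) (n ⊕ o) R) := by
  rw [fromBlocks_multiply, fromBlocks_multiply]
  congr 1 <;> simp [hB, hC, ← Matrix.mul_assoc]

end Ring

variable {K : Type*} [Field K] {l m n o : Type*} [Fintype n] [Fintype o]

theorem rank_fromBlocks_zero_zero (A : Matrix m n K) (D : Matrix l o K) :
    (fromBlocks A 0 0 D).rank = A.rank + D.rank := by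
  let eIn := LinearEquiv.sumArrowLequivProdArrow n o K K
  let eOut := LinearEquiv.sumArrowLequivProdArrow m l K K
  have hconj : A.mulVecLin.prodMap D.mulVecLin =
      eOut.toLinearMap ∘ₗ (fromBlocks A 0 0 D).mulVecLin ∘ₗ eIn.symm.toLinearMap := by
    refine LinearMap.ext fun ⟨x, y⟩ => ?_
    refine Prod.ext ?_ ?_ <;> funext i <;>
      simp [eIn, eOut, fromBlocks_mulVec, Function.comp_def]
  have hrange : (LinearMap.range A.mulVecLin).prod (LinearMap.range D.mulVecLin) =
      (LinearMap.range (fromBlocks A 0 0 D).mulVecLin).map eOut.toLinearMap := by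
    rw [← LinearMap.range_prodMap, hconj, LinearMap.range_comp, LinearMap.range_comp,
      LinearEquiv.range, Submodule.map_top]
  rw [rank, rank, rank, ← LinearEquiv.finrank_map_eq eOut, ← hrange,
    (Submodule.prodEquiv _ _).finrank_eq, Module.finrank_prod]

theorem mul_mul_eq_of_range_le [Fintype m] {A : Matrix m n K} {P : Matrix n m K}
    (hA : A * P * A = A)
    {B : Matrix m o K} (hB : LinearMap.range B.mulVecLin ≤ LinearMap.range A.mulVecLin) :
    A * P * B = B := by
  refine mulVec_injective (funext fun v => ?_)
  obtain ⟨w, hw⟩ := hB ⟨v, rfl⟩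
  simp only [mulVecLin_apply] at hw
  rw [← mulVec_mulVec, ← hw, mulVec_mulVec, hA]

theorem mul_mul_eq_of_range_transpose_le [Fintype m] {A : Matrix m n K} {P : Matrix n m K}
    (hA : A * P * A = A) {C : Matrix o n K}
    (hC : LinearMap.range Cᵀ.mulVecLin ≤ LinearMap.range Aᵀ.mulVecLin) :
    C * P * A = C := by
  have hAt : Aᵀ * Pᵀ * Aᵀ = Aᵀ := by
    rw [← transpose_mul, ← transpose_mul, ← Matrix.mul_assoc, hA]
  simpa [transpose_mul, Matrix.mul_assoc] using
    congrArg transpose (mul_mul_eq_of_range_le hAt hC)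

theorem rank_fromBlocks_of_mul_mul_eq [Fintype l] [Fintype m] [DecidableEq l] [DecidableEq m]
    [DecidableEq n] [DecidableEq o] {A : Matrix m n K} {B : Matrix m o K} {C : Matrix l n K}
    (D : Matrix l o K) {P : Matrix n m K} (hB : A * P * B = B) (hC : C * P * A = C) :
    (fromBlocks A B C D).rank = A.rank + (D - C * P * B).rank := by
  rw [fromBlocks_eq_mul_mul_of_mul_mul_eq D hB hC,
    rank_mul_eq_left_of_isUnit_det _ _ (by simp),
    rank_mul_eq_right_of_isUnit_det _ _ (by simp),
    rank_fromBlocks_zero_zero]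

end Matrix

/-- Rank additivity of the generalized Schur complement. -/
theorem schur_rank_additivity {p q s t : ℕ}
    (A : Matrix (Fin p) (Fin q) ℝ) (B : Matrix (Fin p) (Fin s) ℝ)
    (C : Matrix (Fin t) (Fin q) ℝ) (D : Matrix (Fin t) (Fin s) ℝ)
    (Ap : Matrix (Fin q) (Fin p) ℝ) (hAp : IsMPInv A Ap)
    (hB : LinearMap.range B.mulVecLin ≤ LinearMap.range A.mulVecLin)
    (hC : LinearMap.range Cᵀ.mulVecLin ≤ LinearMap.range Aᵀ.mulVecLin) :
    (fromBlocks A B C D).rank = A.rank + (D - C * Ap * B).rank := by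
  obtain ⟨hAPA, -⟩ := hAp
  exact rank_fromBlocks_of_mul_mul_eq D (mul_mul_eq_of_range_le hAPA hB)
    (mul_mul_eq_of_range_transpose_le hAPA hC)
end

section
/- Let M = [[A, B], [C, D]] be a real matrix of rank r, where blocks A, B, C are fixed. If rank(A) = r, then the block D is uniquely determined: D = C A⁺ B. In particular, any matrix M' = [[A, B], [C, D']] with rank(M') ≤ r satisfies D' = C A⁺ B. -/
open Matrix

/-!
If `rank M' ≤ rank A`, then `rank A ≤ rank [A; C] ≤ rank M' ≤ rank A`. Equality of the first two
forces `ker A ≤ ker C`, hence `C A⁺ A = C`; equality of the last two puts every column of `[B; D']`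
in the column space of `[A; C]`. Writing `[B w; D' w] = [A x; C x]` then gives
`D' w = C x = C A⁺ A x = C A⁺ B w`.
-/

namespace Matrix

variable {l m n o : Type*} [Fintype n] [Fintype o]

section CommRing

variable {R : Type*} [CommRing R]

theorem rank_le_rank_fromCols_left [StrongRankCondition R] (X : Matrix m n R)
    (Y : Matrix m o R) : X.rank ≤ (fromCols X Y).rank :=
  rank_submatrix_le (fromCols X Y) id Sum.inl

theorem rank_le_rank_fromRows_left [StrongRankCondition R] (X : Matrix m n R)
    (Z : Matrix l n R) : X.rank ≤ (fromRows X Z).rank :=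
  rank_submatrix_le (fromRows X Z) Sum.inl id

theorem mul_mul_eq_of_ker_mulVecLin_le [Fintype m] {A : Matrix m n R} {G : Matrix n m R}
    {C : Matrix l n R} (hG : A * G * A = A)
    (h : LinearMap.ker A.mulVecLin ≤ LinearMap.ker C.mulVecLin) : C * G * A = C := by
  rw [ext_iff_mulVec]
  intro v
  have hv : (G * A) *ᵥ v - v ∈ LinearMap.ker A.mulVecLin := by
    simp [mulVec_sub, mulVec_mulVec, ← Matrix.mul_assoc, hG]
  simpa [mulVec_sub, mulVec_mulVec, Matrix.mul_assoc, sub_eq_zero] using h hv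

theorem eq_mul_mul_of_range_fromRows_le [Fintype m] {A : Matrix m n R} {G : Matrix n m R}
    {B : Matrix m o R} {C : Matrix l n R} {D : Matrix l o R} (hC : C * G * A = C)
    (h : LinearMap.range (fromRows B D).mulVecLin ≤ LinearMap.range (fromRows A C).mulVecLin) :
    D = C * G * B := by
  rw [ext_iff_mulVec]
  intro w
  obtain ⟨x, hx⟩ := h ⟨w, rfl⟩
  obtain ⟨hAB, hCD⟩ : A *ᵥ x = B *ᵥ w ∧ C *ᵥ x = D *ᵥ w := by
    simpa [Sum.elim_eq_iff] using hx
  calc D *ᵥ w = C *ᵥ x := hCD.symm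
    _ = (C * G * A) *ᵥ x := by rw [hC]
    _ = (C * G * B) *ᵥ w := by rw [← mulVec_mulVec, hAB, mulVec_mulVec]

end CommRing

section Field

variable {K : Type*} [Field K]

theorem range_mulVecLin_le_of_rank_fromCols_le {X : Matrix m n K} {Y : Matrix m o K}
    (h : (fromCols X Y).rank ≤ X.rank) :
    LinearMap.range Y.mulVecLin ≤ LinearMap.range X.mulVecLin := by
  have hX : LinearMap.range X.mulVecLin ≤ LinearMap.range (fromCols X Y).mulVecLin := by
    rintro _ ⟨v, rfl⟩
    exact ⟨Sum.elim v 0, by simp⟩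
  have hXY := Submodule.eq_of_le_of_finrank_le hX h
  rintro _ ⟨w, rfl⟩
  rw [hXY]
  exact ⟨Sum.elim 0 w, by simp⟩

theorem ker_mulVecLin_le_of_rank_fromRows_le {X : Matrix m n K} {Z : Matrix l n K}
    (h : (fromRows X Z).rank ≤ X.rank) :
    LinearMap.ker X.mulVecLin ≤ LinearMap.ker Z.mulVecLin := by
  have hXZ : LinearMap.ker (fromRows X Z).mulVecLin ≤ LinearMap.ker X.mulVecLin := by
    intro v hv
    simpa using congrArg (· ∘ Sum.inl) (LinearMap.mem_ker.mp hv)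
  have hker : LinearMap.ker (fromRows X Z).mulVecLin = LinearMap.ker X.mulVecLin := by
    refine Submodule.eq_of_le_of_finrank_le hXZ ?_
    have := LinearMap.finrank_range_add_finrank_ker (fromRows X Z).mulVecLin
    have := LinearMap.finrank_range_add_finrank_ker X.mulVecLin
    unfold rank at h
    omega
  intro v hv
  rw [← hker] at hv
  simpa using congrArg (· ∘ Sum.inr) (LinearMap.mem_ker.mp hv)

end Field

end Matrix

/-- If `rank A = r = rank [[A,B],[C,D]]`, then `D = C A⁺ B` is uniquely determined. -/
theorem unique_completion_of_rank_eq {p q s t r : ℕ}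
    (A : Matrix (Fin p) (Fin q) ℝ) (B : Matrix (Fin p) (Fin s) ℝ)
    (C : Matrix (Fin t) (Fin q) ℝ) (D : Matrix (Fin t) (Fin s) ℝ)
    (Ap : Matrix (Fin q) (Fin p) ℝ) (hAp : IsMPInv A Ap)
    (hM : (fromBlocks A B C D).rank = r) (hA : A.rank = r) :
    D = C * Ap * B ∧
      ∀ D' : Matrix (Fin t) (Fin s) ℝ, (fromBlocks A B C D').rank ≤ r → D' = C * Ap * B := by
  have unique : ∀ D' : Matrix (Fin t) (Fin s) ℝ,
      (fromBlocks A B C D').rank ≤ r → D' = C * Ap * B := by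
    intro D' hD'
    rw [← fromCols_fromRows_eq_fromBlocks] at hD'
    have hAC : (fromRows A C).rank ≤ A.rank :=
      hA ▸ (rank_le_rank_fromCols_left _ _).trans hD'
    have hCGA : C * Ap * A = C :=
      mul_mul_eq_of_ker_mulVecLin_le hAp.1 (ker_mulVecLin_le_of_rank_fromRows_le hAC)
    refine eq_mul_mul_of_range_fromRows_le hCGA (range_mulVecLin_le_of_rank_fromCols_le ?_)
    exact hD'.trans (hA ▸ rank_le_rank_fromRows_left A C)
  exact ⟨unique D hM.le, unique⟩
end

section
/- Let M = [[A, B], [C, D]] be a real matrix of rank r with blocks A, B, C fixed. Then D is uniquely determined (i.e., every matrix [[A, B], [C, D']] of rank at most r satisfies D' = D) if and only if rank(A) = r. -/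
/-!
If `rank A < rank M`, one of three things happens: some `z` with `A z = 0` has `C z ≠ 0`; some
`u` with `u A = 0` has `u B ≠ 0` (the transpose of the first case); or `B = A X` and
`ker A ⊆ ker C`. Multiplying `M` on the right by `[[1, Z], [0, 1 + W]]` with `A Z + B W = 0`
changes only the `D` block and does not increase the rank. Taking `Z = z 1ᵀ, W = 0` settles the
first case and `Z = -X, W = 1` the last, where `D ≠ C X` because otherwise `M = [A; C] [1 X]`
would have rank at most `rank A`.

Conversely, if `rank A = rank M` then `C = Y A`, and for any completion `D'` of rank at most
`rank A` the columns of `[B; D']` lie in the column space of `[A; C]`, so `[B; D'] = [A; C] W`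
and `D' = Y A W = Y B` does not depend on `D'`.
-/

open Matrix

namespace Matrix

variable {K : Type*} [Field K] {m₁ m₂ n₁ n₂ : Type*}

theorem exists_mul_eq_of_rank_fromCols_le [Fintype n₁] [Fintype n₂]
    {A : Matrix m₁ n₁ K} {B : Matrix m₁ n₂ K}
    (h : (fromCols A B).rank ≤ A.rank) : ∃ X : Matrix n₁ n₂ K, A * X = B := by
  classical
  have hle : LinearMap.range A.mulVecLin ≤ LinearMap.range (fromCols A B).mulVecLin := by
    rintro _ ⟨v, rfl⟩
    exact ⟨Sum.elim v 0, by simp⟩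
  have hcol : ∀ j, B.col j ∈ LinearMap.range A.mulVecLin := by
    intro j
    rw [Submodule.eq_of_le_of_finrank_le hle h]
    exact ⟨Pi.single (Sum.inr j) 1, by ext; simp⟩
  choose x hx using hcol
  refine ⟨(of x)ᵀ, ext_col fun j => ?_⟩
  rw [← hx j]
  rfl

theorem exists_mul_eq_of_rank_fromRows_le [Fintype m₁] [Fintype m₂] [Fintype n₁]
    {A : Matrix m₁ n₁ K} {C : Matrix m₂ n₁ K}
    (h : (fromRows A C).rank ≤ A.rank) : ∃ Y : Matrix m₂ m₁ K, Y * A = C := by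
  rw [← rank_transpose, transpose_fromRows, ← rank_transpose A] at h
  obtain ⟨X, hX⟩ := exists_mul_eq_of_rank_fromCols_le h
  exact ⟨Xᵀ, by rw [← transpose_transpose C, ← hX, transpose_mul, transpose_transpose]⟩

theorem rank_fromRows_le_of_mulVec_eq_zero [Fintype n₁] {A : Matrix m₁ n₁ K} {C : Matrix m₂ n₁ K}
    (h : ∀ v, A *ᵥ v = 0 → C *ᵥ v = 0) : (fromRows A C).rank ≤ A.rank := by
  have hker : LinearMap.ker (fromRows A C).mulVecLin = LinearMap.ker A.mulVecLin := by
    ext v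
    rw [LinearMap.mem_ker, LinearMap.mem_ker, mulVecLin_apply, mulVecLin_apply, fromRows_mulVec,
      ← Sum.elim_zero_zero, Sum.elim_eq_iff]
    exact ⟨And.left, fun hv => ⟨hv, h v hv⟩⟩
  have h₁ := (fromRows A C).mulVecLin.finrank_range_add_finrank_ker
  have h₂ := A.mulVecLin.finrank_range_add_finrank_ker
  rw [hker] at h₁
  exact (Nat.add_right_cancel (h₁.trans h₂.symm)).le

theorem rank_fromBlocks_le_of_mul_add_mul_eq_zero [Fintype n₁] [Fintype n₂]
    (A : Matrix m₁ n₁ K) (B : Matrix m₁ n₂ K) (C : Matrix m₂ n₁ K)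
    (D : Matrix m₂ n₂ K) {Z : Matrix n₁ n₂ K} {W : Matrix n₂ n₂ K} (h : A * Z + B * W = 0) :
    (fromBlocks A B C (D + C * Z + D * W)).rank ≤ (fromBlocks A B C D).rank := by
  classical
  have hfac : fromBlocks A B C (D + C * Z + D * W) =
      fromBlocks A B C D * fromBlocks 1 Z 0 (1 + W) := by
    simp only [fromBlocks_multiply, Matrix.mul_one, Matrix.mul_zero, add_zero, Matrix.mul_add]
    rw [add_left_comm (A * Z), h, add_zero, add_left_comm (C * Z), add_assoc]
  rw [hfac]
  exact rank_mul_le_left _ _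

theorem rank_fromCols_le_of_vecMul_eq_zero [Fintype m₁] [Fintype n₁] [Fintype n₂]
    {A : Matrix m₁ n₁ K} {B : Matrix m₁ n₂ K}
    (h : ∀ u, u ᵥ* A = 0 → u ᵥ* B = 0) : (fromCols A B).rank ≤ A.rank := by
  rw [← rank_transpose, transpose_fromCols, ← rank_transpose A]
  exact rank_fromRows_le_of_mulVec_eq_zero fun u => by simpa only [mulVec_transpose] using h u

theorem rank_le_rank_fromRows [Fintype n₁] (A : Matrix m₁ n₁ K) (C : Matrix m₂ n₁ K) :
    A.rank ≤ (fromRows A C).rank :=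
  rank_submatrix_le (fromRows A C) Sum.inl id

theorem rank_fromRows_le_rank_fromBlocks [Fintype n₁] [Fintype n₂]
    (A : Matrix m₁ n₁ K) (B : Matrix m₁ n₂ K) (C : Matrix m₂ n₁ K)
    (D : Matrix m₂ n₂ K) :
    (fromRows A C).rank ≤ (fromBlocks A B C D).rank :=
  le_of_eq_of_le (congrArg rank (by ext (i | i) j <;> rfl)) (rank_submatrix_le _ id Sum.inl)

theorem rank_fromBlocks_le_of_mul_eq [Fintype n₁] [Fintype n₂]
    {A : Matrix m₁ n₁ K} {B : Matrix m₁ n₂ K} {C : Matrix m₂ n₁ K}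
    {D : Matrix m₂ n₂ K} {X : Matrix n₁ n₂ K} (hB : A * X = B) (hD : C * X = D) :
    (fromBlocks A B C D).rank ≤ (fromRows A C).rank := by
  classical
  have hfac : fromBlocks A B C D = fromRows A C * fromCols 1 X := by
    rw [fromRows_mul_fromCols, Matrix.mul_one, Matrix.mul_one, hB, hD]
  rw [hfac]
  exact rank_mul_le_left _ _

section Completion

variable [Fintype n₁] [Fintype n₂] {A : Matrix m₁ n₁ K} {B : Matrix m₁ n₂ K}
  {C : Matrix m₂ n₁ K} {D : Matrix m₂ n₂ K}

theorem exists_ne_rank_fromBlocks_le_of_mulVec [Nonempty n₂] {z : n₁ → K}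
    (hAz : A *ᵥ z = 0) (hCz : C *ᵥ z ≠ 0) :
    ∃ D' ≠ D, (fromBlocks A B C D').rank ≤ (fromBlocks A B C D).rank := by
  refine ⟨_, ?_, rank_fromBlocks_le_of_mul_add_mul_eq_zero A B C D (Z := vecMulVec z 1) (W := 0)
    (by rw [mul_vecMulVec, hAz, zero_vecMulVec, Matrix.mul_zero, add_zero])⟩
  rw [Matrix.mul_zero, add_zero, Ne, add_eq_left, mul_vecMulVec]
  obtain ⟨i, hi⟩ := Function.ne_iff.mp hCz
  exact fun h => hi (by simpa using congrFun₂ h i (Classical.arbitrary n₂))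

theorem exists_ne_rank_fromBlocks_le_of_vecMul [Fintype m₁] [Fintype m₂] [Nonempty m₂]
    {u : m₁ → K}
    (huA : u ᵥ* A = 0) (huB : u ᵥ* B ≠ 0) :
    ∃ D' ≠ D, (fromBlocks A B C D').rank ≤ (fromBlocks A B C D).rank := by
  rw [← mulVec_transpose] at huA huB
  obtain ⟨E, hE, hrank⟩ :=
    exists_ne_rank_fromBlocks_le_of_mulVec (B := Cᵀ) (D := Dᵀ) huA huB
  refine ⟨Eᵀ, fun h => hE (by rw [← h, transpose_transpose]), ?_⟩
  rwa [← rank_transpose, fromBlocks_transpose, transpose_transpose,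
    ← rank_transpose (fromBlocks A B C D), fromBlocks_transpose]

theorem exists_ne_rank_fromBlocks_le_of_mul_eq {X : Matrix n₁ n₂ K} (hX : A * X = B)
    (hD : C * X ≠ D) :
    ∃ D' ≠ D, (fromBlocks A B C D').rank ≤ (fromBlocks A B C D).rank := by
  classical
  refine ⟨_, ?_, rank_fromBlocks_le_of_mul_add_mul_eq_zero A B C D (Z := -X) (W := 1)
    (by rw [Matrix.mul_neg, hX, Matrix.mul_one, neg_add_cancel])⟩
  rw [Matrix.mul_neg, Matrix.mul_one, Ne, add_eq_right, add_neg_eq_zero]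
  exact hD ∘ Eq.symm

theorem exists_ne_rank_fromBlocks_le_of_rank_lt [Fintype m₁] [Fintype m₂]
    [Nonempty m₂] [Nonempty n₂]
    (h : A.rank < (fromBlocks A B C D).rank) :
    ∃ D' ≠ D, (fromBlocks A B C D').rank ≤ (fromBlocks A B C D).rank := by
  by_cases hz : ∃ z, A *ᵥ z = 0 ∧ C *ᵥ z ≠ 0
  · obtain ⟨z, hAz, hCz⟩ := hz
    exact exists_ne_rank_fromBlocks_le_of_mulVec hAz hCz
  by_cases hu : ∃ u, u ᵥ* A = 0 ∧ u ᵥ* B ≠ 0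
  · obtain ⟨u, huA, huB⟩ := hu
    exact exists_ne_rank_fromBlocks_le_of_vecMul huA huB
  push Not at hz hu
  obtain ⟨X, hX⟩ := exists_mul_eq_of_rank_fromCols_le (rank_fromCols_le_of_vecMul_eq_zero hu)
  refine exists_ne_rank_fromBlocks_le_of_mul_eq hX fun hD => h.not_ge ?_
  exact (rank_fromBlocks_le_of_mul_eq hX hD).trans (rank_fromRows_le_of_mulVec_eq_zero hz)

theorem eq_mul_of_rank_fromBlocks_le [Fintype m₁] {Y : Matrix m₂ m₁ K} (hY : Y * A = C)
    (h : (fromBlocks A B C D).rank ≤ A.rank) : D = Y * B := by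
  have hle : (fromCols (fromRows A C) (fromRows B D)).rank ≤ (fromRows A C).rank := by
    rw [fromCols_fromRows_eq_fromBlocks]
    exact h.trans (rank_le_rank_fromRows A C)
  obtain ⟨W, hW⟩ := exists_mul_eq_of_rank_fromCols_le hle
  obtain ⟨hB, hD⟩ := (fromRows_ext_iff _ _ _ _).mp ((fromRows_mul A C W).symm.trans hW)
  rw [← hD, ← hB, ← hY, Matrix.mul_assoc]

theorem eq_of_rank_fromBlocks_le [Fintype m₁] [Fintype m₂] {D' : Matrix m₂ n₂ K}
    (hD : (fromBlocks A B C D).rank ≤ A.rank)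
    (hD' : (fromBlocks A B C D').rank ≤ A.rank) : D' = D := by
  obtain ⟨Y, hY⟩ :=
    exists_mul_eq_of_rank_fromRows_le ((rank_fromRows_le_rank_fromBlocks A B C D).trans hD)
  rw [eq_mul_of_rank_fromBlocks_le hY hD', eq_mul_of_rank_fromBlocks_le hY hD]

end Completion

end Matrix

theorem unique_completion_iff_rank_eq_general {p q s t r : ℕ}
    (hs : 0 < s) (ht : 0 < t)
    (A : Matrix (Fin p) (Fin q) ℝ) (B : Matrix (Fin p) (Fin s) ℝ)
    (C : Matrix (Fin t) (Fin q) ℝ) (D : Matrix (Fin t) (Fin s) ℝ)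
    (hM : (fromBlocks A B C D).rank = r) :
    (∀ D' : Matrix (Fin t) (Fin s) ℝ, (fromBlocks A B C D').rank ≤ r → D' = D) ↔
      A.rank = r := by
  have : Nonempty (Fin s) := ⟨⟨0, hs⟩⟩
  have : Nonempty (Fin t) := ⟨⟨0, ht⟩⟩
  have hA : A.rank ≤ r :=
    hM ▸ (rank_le_rank_fromRows A C).trans (rank_fromRows_le_rank_fromBlocks A B C D)
  constructor
  · intro huniq
    by_contra hne
    obtain ⟨D', hD'D, hD'⟩ := exists_ne_rank_fromBlocks_le_of_rank_lt (hM ▸ hA.lt_of_ne hne)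
    exact hD'D (huniq D' (hM ▸ hD'))
  · intro hAr D' hD'
    exact eq_of_rank_fromBlocks_le (hM.trans hAr.symm).le (hD'.trans hAr.ge)

/-- `D` is uniquely determined by `A, B, C` and the rank constraint iff `rank A = r`. -/
theorem unique_completion_iff_rank_eq {p q s t r : ℕ}
    (hp : 0 < p) (hq : 0 < q) (hs : 0 < s) (ht : 0 < t) (hr : 1 ≤ r)
    (A : Matrix (Fin p) (Fin q) ℝ) (B : Matrix (Fin p) (Fin s) ℝ)
    (C : Matrix (Fin t) (Fin q) ℝ) (D : Matrix (Fin t) (Fin s) ℝ)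
    (hM : (fromBlocks A B C D).rank = r) :
    (∀ D' : Matrix (Fin t) (Fin s) ℝ, (fromBlocks A B C D').rank ≤ r → D' = D) ↔
      A.rank = r :=
  unique_completion_iff_rank_eq_general hs ht A B C D hM
end

section
/- Let Z be a real matrix of rank r partitioned into a 3×3 block pattern [[Z₁, X₁, X₂], [Y₁, Q, X₃], [Y₂, Y₃, Z₂]] where all blocks except Z₁ and Z₂ are fixed. If rank(Q) = r, then Z₁ and Z₂ are uniquely determined: any matrix with the same fixed blocks and rank at most r agrees with Z everywhere. -/
/-!
Let `C` be the block column through `Q`. Restricting to the rows of `Q` maps the column space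
of `C` onto that of `Q`, and the column space of `C` lies in that of `Z`; as
`rank Q = r ≥ rank Z`, all three spaces have dimension `r`. So the columns of `Z` span the column
space of `C`, and restriction to the rows of `Q` is injective on it. A completion `Z'` of rank
`≤ r` has the same `C`, hence its columns lie in the same space, and they agree with those of `Z`
on the rows of `Q`; so they are equal.
-/

open Matrix

/-- A 3×3 block matrix. -/
def block3 {m1 m2 m3 n1 n2 n3 : ℕ}
    (A11 : Matrix (Fin m1) (Fin n1) ℝ) (A12 : Matrix (Fin m1) (Fin n2) ℝ)
    (A13 : Matrix (Fin m1) (Fin n3) ℝ)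
    (A21 : Matrix (Fin m2) (Fin n1) ℝ) (A22 : Matrix (Fin m2) (Fin n2) ℝ)
    (A23 : Matrix (Fin m2) (Fin n3) ℝ)
    (A31 : Matrix (Fin m3) (Fin n1) ℝ) (A32 : Matrix (Fin m3) (Fin n2) ℝ)
    (A33 : Matrix (Fin m3) (Fin n3) ℝ) :
    Matrix ((Fin m1 ⊕ Fin m2) ⊕ Fin m3) ((Fin n1 ⊕ Fin n2) ⊕ Fin n3) ℝ :=
  Matrix.fromBlocks (Matrix.fromBlocks A11 A12 A21 A22) (Matrix.fromRows A13 A23)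
    (Matrix.fromCols A31 A32) A33

open Module Submodule Set

theorem Submodule.injOn_of_finrank_map_eq {K V W : Type*} [DivisionRing K] [AddCommGroup V]
    [Module K V] [AddCommGroup W] [Module K W] [FiniteDimensional K V] (φ : V →ₗ[K] W)
    {S : Submodule K V} (h : finrank K (S.map φ) = finrank K S) : InjOn φ S := by
  have hinj : Function.Injective (φ.submoduleMap S) :=
    (LinearMap.injective_iff_surjective_of_finrank_eq_finrank h.symm).mpr
      (φ.submoduleMap_surjective S)
  intro x hx y hy hxy
  exact congrArg Subtype.val (@hinj ⟨x, hx⟩ ⟨y, hy⟩ (Subtype.ext hxy))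

namespace Matrix

variable {K ι ι' κ κ' : Type*} [Field K]

theorem span_cols_submatrix_le (M : Matrix ι κ K) (g : κ' → κ) :
    span K (range (M.submatrix id g).col) ≤ span K (range M.col) :=
  span_mono (range_subset_iff.2 fun j => ⟨g j, rfl⟩)

theorem map_funLeft_span_cols (M : Matrix ι κ K) (f : ι' → ι) :
    (span K (range M.col)).map (LinearMap.funLeft K K f) =
      span K (range (M.submatrix f id).col) := by
  rw [map_span, ← range_comp]
  rfl

variable [Fintype ι] [Fintype κ] [Fintype κ']

theorem span_cols_submatrix_eq_of_rank_le (M : Matrix ι κ K) (f : ι' → ι) (g : κ' → κ)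
    (h : M.rank ≤ (M.submatrix f g).rank) :
    span K (range (M.submatrix id g).col) = span K (range M.col) := by
  refine eq_of_le_of_finrank_le (span_cols_submatrix_le M g) ?_
  rw [← rank_eq_finrank_span_cols, ← rank_eq_finrank_span_cols]
  exact h.trans ((M.submatrix id g).rank_submatrix_le f id)

theorem eq_of_submatrix_eq_of_rank_le (M M' : Matrix ι κ K) (f : ι' → ι) (g : κ' → κ)
    (hM : M.rank ≤ (M.submatrix f g).rank) (hM' : M'.rank ≤ (M'.submatrix f g).rank)
    (hrows : M.submatrix f id = M'.submatrix f id) (hcols : M.submatrix id g = M'.submatrix id g) :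
    M = M' := by
  set S := span K (range (M.submatrix id g).col)
  have hSM : S = span K (range M.col) := span_cols_submatrix_eq_of_rank_le M f g hM
  have hSM' : S = span K (range M'.col) := by
    change span K (range (M.submatrix id g).col) = _
    rw [hcols]
    exact span_cols_submatrix_eq_of_rank_le M' f g hM'
  have hmap : finrank K (S.map (LinearMap.funLeft K K f)) = finrank K S := by
    refine le_antisymm (finrank_map_le _ _) ?_
    rw [map_funLeft_span_cols, hSM, ← rank_eq_finrank_span_cols, ← rank_eq_finrank_span_cols]
    exact hM
  have hinj := Submodule.injOn_of_finrank_map_eq _ hmap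
  ext i j
  have hcol : M.col j = M'.col j :=
    hinj (hSM ▸ subset_span ⟨j, rfl⟩) (hSM' ▸ subset_span ⟨j, rfl⟩)
      (funext fun i' => congrFun (congrFun hrows i') j)
  exact congrFun hcol i

end Matrix

/-- Two-biclique merging: if the overlap block `Q` has full rank `r`, the corner blocks
`Z₁` and `Z₂` are uniquely determined among rank-`≤ r` completions. -/
theorem two_biclique_unique_of_overlap_rank {m1 m2 m3 n1 n2 n3 r : ℕ}
    (Z₁ : Matrix (Fin m1) (Fin n1) ℝ) (X₁ : Matrix (Fin m1) (Fin n2) ℝ)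
    (X₂ : Matrix (Fin m1) (Fin n3) ℝ)
    (Y₁ : Matrix (Fin m2) (Fin n1) ℝ) (Q : Matrix (Fin m2) (Fin n2) ℝ)
    (X₃ : Matrix (Fin m2) (Fin n3) ℝ)
    (Y₂ : Matrix (Fin m3) (Fin n1) ℝ) (Y₃ : Matrix (Fin m3) (Fin n2) ℝ)
    (Z₂ : Matrix (Fin m3) (Fin n3) ℝ)
    (hZ : (block3 Z₁ X₁ X₂ Y₁ Q X₃ Y₂ Y₃ Z₂).rank = r) (hQ : Q.rank = r) :
    ∀ (Z₁' : Matrix (Fin m1) (Fin n1) ℝ) (Z₂' : Matrix (Fin m3) (Fin n3) ℝ),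
      (block3 Z₁' X₁ X₂ Y₁ Q X₃ Y₂ Y₃ Z₂').rank ≤ r → Z₁' = Z₁ ∧ Z₂' = Z₂ := by
  intro Z₁' Z₂' hZ'
  have heq : block3 Z₁' X₁ X₂ Y₁ Q X₃ Y₂ Y₃ Z₂' = block3 Z₁ X₁ X₂ Y₁ Q X₃ Y₂ Y₃ Z₂ := by
    refine eq_of_submatrix_eq_of_rank_le _ _ (Sum.inl ∘ Sum.inr) (Sum.inl ∘ Sum.inr)
      (hZ'.trans_eq hQ.symm) (hZ.trans hQ.symm).le ?_ ?_
    · ext i ((j | j) | j) <;> rfl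
    · ext ((i | i) | i) j <;> rfl
  exact ⟨congrArg (·.submatrix (Sum.inl ∘ Sum.inl) (Sum.inl ∘ Sum.inl)) heq,
    congrArg (·.submatrix Sum.inr Sum.inr) heq⟩
end

section
/- The converse of the two-biclique uniqueness criterion fails: there exists a 3×4 real matrix of rank 2 with the staircase pattern [[Z₁, 6, 5, 3], [1, 2, 3, 2], [3, 4, 2, Z₂]] in which the overlap block Q = [2, 3] has rank 1 < 2, yet the unknown entries Z₁ and Z₂ are uniquely determined (Z₁ = 4 and Z₂ = 1) among all rank-2 completions. -/
/-!
A square minor with nonzero determinant bounds the rank from below, so rank `≤ 2` forces every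
`3 × 3` minor to vanish. The minor on the first three columns is `32 - 8 Z₁` and the one on the
last three is `8 Z₂ - 8`, which pins down `Z₁ = 4` and `Z₂ = 1`. Conversely that completion
factors through `ℝ²`: its first row is the sum of the other two.
-/

open Matrix

namespace Matrix

variable {k m n R : Type*} [Fintype k] [DecidableEq k] [Fintype n] [CommRing R] [IsDomain R]

theorem card_le_rank_of_det_submatrix_ne_zero (A : Matrix m n R) (r : k → m) (c : k → n)
    (h : (A.submatrix r c).det ≠ 0) : Fintype.card k ≤ A.rank :=
  (rank_of_det_ne_zero h).symm.trans_le (rank_submatrix_le A r c)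

theorem det_submatrix_eq_zero_of_rank_lt {A : Matrix m n R} (hA : A.rank < Fintype.card k)
    (r : k → m) (c : k → n) : (A.submatrix r c).det = 0 := by
  by_contra h
  exact hA.not_ge (card_le_rank_of_det_submatrix_ne_zero A r c h)

end Matrix

def staircase (z₁ z₂ : ℝ) : Matrix (Fin 3) (Fin 4) ℝ :=
  !![z₁, 6, 5, 3; 1, 2, 3, 2; 3, 4, 2, z₂]

theorem staircase_four_one_eq_mul :
    staircase 4 1 = !![(1 : ℝ), 1; 1, 0; 0, 1] * !![(1 : ℝ), 2, 3, 2; 3, 4, 2, 1] := by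
  ext i j
  fin_cases i <;> fin_cases j <;> norm_num [staircase, mul_apply, Fin.sum_univ_two]

theorem rank_staircase_four_one_le : (staircase 4 1).rank ≤ 2 :=
  staircase_four_one_eq_mul ▸ (rank_mul_le_left _ _).trans (rank_le_width _)

theorem two_le_rank_staircase (z₁ z₂ : ℝ) : 2 ≤ (staircase z₁ z₂).rank := by
  simpa using card_le_rank_of_det_submatrix_ne_zero (staircase z₁ z₂) ![1, 2] ![0, 1]
    (by rw [det_fin_two]; norm_num [staircase, cons_val_two])

theorem eq_of_rank_staircase_le (z₁ z₂ : ℝ) (h : (staircase z₁ z₂).rank ≤ 2) :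
    z₁ = 4 ∧ z₂ = 1 := by
  have hlt : (staircase z₁ z₂).rank < Fintype.card (Fin 3) := by simpa using h.trans_lt (by norm_num)
  have h₁ : 32 - 8 * z₁ = 0 := by
    rw [← det_submatrix_eq_zero_of_rank_lt hlt id ![0, 1, 2]]
    simp only [staircase, det_fin_three, submatrix_apply, id_eq, of_apply, cons_val', cons_val,
      cons_val_zero, cons_val_one, cons_val_fin_one]
    ring
  have h₂ : 8 * z₂ - 8 = 0 := by
    rw [← det_submatrix_eq_zero_of_rank_lt hlt id ![1, 2, 3]]
    simp only [staircase, det_fin_three, submatrix_apply, id_eq, of_apply, cons_val', cons_val,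
      cons_val_zero, cons_val_one, cons_val_fin_one]
    ring
  constructor <;> linarith

/-- Counterexample to the converse of the two-biclique criterion: the overlap block
`[2, 3]` has rank `1 < 2`, yet the staircase completion of rank `≤ 2` is unique,
namely `Z₁ = 4`, `Z₂ = 1`. -/
theorem converse_two_biclique_fails :
    (!![(2 : ℝ), 3]).rank = 1 ∧
    (!![(4 : ℝ), 6, 5, 3; 1, 2, 3, 2; 3, 4, 2, 1]).rank = 2 ∧
    (∀ z₁ z₂ : ℝ,
      (!![z₁, 6, 5, 3; 1, 2, 3, 2; 3, 4, 2, z₂]).rank ≤ 2 ↔ z₁ = 4 ∧ z₂ = 1) := by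
  refine ⟨?_, le_antisymm rank_staircase_four_one_le (two_le_rank_staircase 4 1),
    fun z₁ z₂ => ⟨eq_of_rank_staircase_le z₁ z₂, ?_⟩⟩
  · refine le_antisymm (rank_le_height _) ?_
    simpa using card_le_rank_of_det_submatrix_ne_zero !![(2 : ℝ), 3] ![0] ![0]
      (by rw [det_fin_one]; norm_num)
  · rintro ⟨rfl, rfl⟩
    exact rank_staircase_four_one_le
end

section
/- Let M = [[E, F], [A, B], [C, D]] be a real matrix of rank r where the blocks A, B, C, F are fixed and E, D are unknown. Then M is the unique rank-≤-r matrix with those fixed blocks if and only if rank(A) = r and rank(B) = r. -/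
open Matrix

/-- A 3×2 block matrix with block rows `(R11, R12)`, `(R21, R22)`, `(R31, R32)`. -/
def block32 {m1 m2 m3 n1 n2 : ℕ}
    (R11 : Matrix (Fin m1) (Fin n1) ℝ) (R12 : Matrix (Fin m1) (Fin n2) ℝ)
    (R21 : Matrix (Fin m2) (Fin n1) ℝ) (R22 : Matrix (Fin m2) (Fin n2) ℝ)
    (R31 : Matrix (Fin m3) (Fin n1) ℝ) (R32 : Matrix (Fin m3) (Fin n2) ℝ) :
    Matrix ((Fin m1 ⊕ Fin m2) ⊕ Fin m3) (Fin n1 ⊕ Fin n2) ℝ :=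
  Matrix.fromRows (Matrix.fromBlocks R11 R12 R21 R22) (Matrix.fromCols R31 R32)

/-!
If `rank A = rank B = r`, then for every completion `M'` of rank `≤ r` the middle block row
`[A B]` already has the full rank of `M'`, so the top block row is `P [A B]` for some `P`, and
`B` spans the columns of `[A B]`, say `A = B Y`. Hence `E' = P A = P B Y = F Y` does not depend
on the completion; symmetrically `D' = C X` where `B = A X`.

Conversely, factor `M = U V` through `ℝ^r` with `U = [U₁; U₂; U₃]` and `V = [V₁ V₂]` of rank `r`,
so that `A = U₂ V₁`. If `x V₁ = 0` with `x ≠ 0`, replacing `U₃` by `U₃ + 1 xᵀ` changes `D` only.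
If `U₂ y = 0` with `y ≠ 0`, a rank-one change of `V₂` along `y` (when `U₁ y = 0`), or of `U₃` and
`V₁` together (otherwise), changes `D` or `E` alone. So uniqueness forces `V₁` and `U₂` to be
injective, i.e. `rank A = r`. Reversing the order of the block rows and of the block columns
exchanges the roles of `A` and `B`.
-/

namespace Matrix

-- `Matrix.vecMulVec_eq_zero` only covers two vectors on the same index type.
theorem vecMulVec_eq_zero_iff {α m n : Type*} [MulZeroClass α] [NoZeroDivisors α] {a : m → α}
    {b : n → α} : vecMulVec a b = 0 ↔ a = 0 ∨ b = 0 := by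
  simp only [← ext_iff, vecMulVec_apply, zero_apply, mul_eq_zero, funext_iff, Pi.zero_apply,
    forall_or_left, forall_or_right]

variable {K : Type*} [Field K] {l m n : Type*} [Fintype n]

theorem rank_eq_card_height_iff [Fintype m] (M : Matrix m n K) :
    M.rank = Fintype.card m ↔ Function.Injective M.vecMul := by
  rw [vecMul_injective_iff, linearIndependent_iff_card_eq_finrank_span, rank_eq_finrank_span_row,
    Set.finrank, eq_comm]

theorem rank_eq_card_width_iff [Fintype m] (M : Matrix m n K) :
    M.rank = Fintype.card n ↔ Function.Injective M.mulVec := by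
  rw [← rank_transpose, rank_eq_card_height_iff]
  simp only [vecMul_transpose]

theorem rank_mul_eq_right_of_mulVec_injective [Fintype m] (X : Matrix l m K) (Y : Matrix m n K)
    (hX : Function.Injective X.mulVec) : (X * Y).rank = Y.rank := by
  rw [rank, rank, mulVecLin_mul, LinearMap.range_comp]
  exact (Submodule.equivMapOfInjective X.mulVecLin hX _).finrank_eq.symm

theorem exists_eq_mul_of_rank_eq (P : Matrix m n K) {r : ℕ} (h : P.rank = r) :
    ∃ (U : Matrix m (Fin r) K) (V : Matrix (Fin r) n K), P = U * V := by
  subst h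
  let b := Module.finBasis K (LinearMap.range P.mulVecLin)
  have hcol (j : n) : P.col j ∈ LinearMap.range P.mulVecLin := by
    rw [range_mulVecLin]; exact Submodule.subset_span ⟨j, rfl⟩
  refine ⟨of fun i k => (b k : m → K) i, of fun k j => b.repr ⟨P.col j, hcol j⟩ k, ?_⟩
  ext i j
  have := congrFun (congrArg Subtype.val (b.sum_repr ⟨P.col j, hcol j⟩)) i
  simp only [Submodule.coe_sum, Submodule.coe_smul, Finset.sum_apply, Pi.smul_apply,
    smul_eq_mul, col_apply] at this
  simp only [mul_apply, of_apply, ← this]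
  exact Finset.sum_congr rfl fun _ _ => mul_comm _ _

theorem exists_eq_mul_of_rank_fromRows_le [Fintype l] [Fintype m] (T : Matrix l n K)
    (S : Matrix m n K) (h : (fromRows T S).rank ≤ S.rank) : ∃ P : Matrix l m K, T = P * S := by
  have hspan :
      Submodule.span K (Set.range S.row) = Submodule.span K (Set.range (fromRows T S).row) :=
    Submodule.eq_of_le_of_finrank_le
      (Submodule.span_mono (by rintro _ ⟨i, rfl⟩; exact ⟨Sum.inr i, rfl⟩))
      (by rwa [← rank_eq_finrank_span_row, ← rank_eq_finrank_span_row])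
  have hT (i : l) : T.row i ∈ Submodule.span K (Set.range S.row) :=
    hspan ▸ Submodule.subset_span ⟨Sum.inl i, rfl⟩
  choose P hP using fun i => (Submodule.mem_span_range_iff_exists_fun K).1 (hT i)
  refine ⟨of P, ?_⟩
  ext i j
  have := congrFun (hP i) j
  simp only [row, Finset.sum_apply, Pi.smul_apply, smul_eq_mul] at this
  simp [mul_apply, ← this]

theorem exists_eq_mul_of_rank_fromCols_le [Fintype l] [Fintype m] (A : Matrix m n K)
    (B : Matrix m l K) (h : (fromCols A B).rank ≤ B.rank) : ∃ Y : Matrix l n K, A = B * Y := by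
  obtain ⟨P, hP⟩ := exists_eq_mul_of_rank_fromRows_le Aᵀ Bᵀ
    (by rwa [← transpose_fromCols, rank_transpose, rank_transpose])
  exact ⟨Pᵀ, by rw [← transpose_transpose A, hP, transpose_mul, transpose_transpose]⟩

end Matrix

section Block32

variable {m1 m2 m3 n1 n2 r : ℕ}
  {E E' : Matrix (Fin m1) (Fin n1) ℝ} {F : Matrix (Fin m1) (Fin n2) ℝ}
  {A : Matrix (Fin m2) (Fin n1) ℝ} {B : Matrix (Fin m2) (Fin n2) ℝ}
  {C : Matrix (Fin m3) (Fin n1) ℝ} {D D' : Matrix (Fin m3) (Fin n2) ℝ}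

theorem block32_inj {E₂ F₂ A₂ B₂ C₂ D₂} :
    block32 E F A B C D = block32 E₂ F₂ A₂ B₂ C₂ D₂ ↔
      E = E₂ ∧ F = F₂ ∧ A = A₂ ∧ B = B₂ ∧ C = C₂ ∧ D = D₂ := by
  simp only [block32, fromRows_inj.eq_iff, fromBlocks_inj, fromCols_inj.eq_iff, and_assoc]

theorem fromRows_fromRows_mul_fromCols (U1 : Matrix (Fin m1) (Fin r) ℝ)
    (U2 : Matrix (Fin m2) (Fin r) ℝ) (U3 : Matrix (Fin m3) (Fin r) ℝ)
    (V1 : Matrix (Fin r) (Fin n1) ℝ) (V2 : Matrix (Fin r) (Fin n2) ℝ) :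
    fromRows (fromRows U1 U2) U3 * fromCols V1 V2 =
      block32 (U1 * V1) (U1 * V2) (U2 * V1) (U2 * V2) (U3 * V1) (U3 * V2) := by
  rw [fromRows_mul, fromRows_mul_fromCols, mul_fromCols, block32]

theorem rank_block32_flip : (block32 D C B A F E).rank = (block32 E F A B C D).rank := by
  let e : (Fin m3 ⊕ Fin m2) ⊕ Fin m1 ≃ (Fin m1 ⊕ Fin m2) ⊕ Fin m3 :=
    (Equiv.sumComm _ _).trans
      ((Equiv.sumCongr (Equiv.refl _) (Equiv.sumComm _ _)).trans (Equiv.sumAssoc _ _ _).symm)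
  have : block32 D C B A F E = (block32 E F A B C D).submatrix e (Equiv.sumComm _ _) := by
    ext ((i | i) | i) (j | j) <;> rfl
  rw [this, rank_submatrix]

theorem rank_fromCols_le_rank_block32 : (fromCols A B).rank ≤ (block32 E F A B C D).rank := by
  have : (block32 E F A B C D).submatrix (Sum.inl ∘ Sum.inr) id = fromCols A B := by
    ext i (j | j) <;> rfl
  exact this ▸ rank_submatrix_le _ _ _

theorem rank_fromBlocks_le_rank_block32 :
    (fromBlocks E F A B).rank ≤ (block32 E F A B C D).rank :=
  rank_submatrix_le (block32 E F A B C D) Sum.inl id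

theorem eq_mul_of_rank_block32_le {Y : Matrix (Fin n2) (Fin n1) ℝ} (hY : A = B * Y)
    (h : (block32 E F A B C D).rank ≤ B.rank) : E = F * Y := by
  obtain ⟨P, hP⟩ := exists_eq_mul_of_rank_fromRows_le (fromCols E F) (fromCols A B) (by
    rw [fromRows_fromCols_eq_fromBlocks]
    exact rank_fromBlocks_le_rank_block32.trans
      (h.trans (rank_submatrix_le (fromCols A B) id Sum.inr)))
  rw [mul_fromCols, fromCols_inj.eq_iff] at hP
  rw [hP.1, hP.2, hY, Matrix.mul_assoc]

theorem eq_of_rank_block32_le (hM : (block32 E F A B C D).rank = r) (hB : B.rank = r)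
    (h : (block32 E' F A B C D').rank ≤ r) : E' = E := by
  obtain ⟨Y, hY⟩ := exists_eq_mul_of_rank_fromCols_le A B
    (hB ▸ hM ▸ rank_fromCols_le_rank_block32)
  rw [eq_mul_of_rank_block32_le hY (h.trans hB.ge),
    eq_mul_of_rank_block32_le hY (hM.trans hB.symm).le]

theorem exists_block32_factorization (hM : (block32 E F A B C D).rank = r) :
    ∃ (U1 : Matrix (Fin m1) (Fin r) ℝ) (U2 : Matrix (Fin m2) (Fin r) ℝ)
      (U3 : Matrix (Fin m3) (Fin r) ℝ) (V1 : Matrix (Fin r) (Fin n1) ℝ)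
      (V2 : Matrix (Fin r) (Fin n2) ℝ),
      (∀ y, U1 *ᵥ y = 0 → U2 *ᵥ y = 0 → U3 *ᵥ y = 0 → y = 0) ∧
      (∀ x, x ᵥ* V1 = 0 → x ᵥ* V2 = 0 → x = 0) ∧
      E = U1 * V1 ∧ F = U1 * V2 ∧ A = U2 * V1 ∧ B = U2 * V2 ∧ C = U3 * V1 ∧ D = U3 * V2 := by
  obtain ⟨U, V, hUV⟩ := exists_eq_mul_of_rank_eq _ hM
  have hU : Function.Injective U.mulVec := by
    refine (rank_eq_card_width_iff U).1 (le_antisymm (rank_le_card_width U) ?_)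
    simpa [← hUV, hM] using rank_mul_le_left U V
  have hV : Function.Injective V.vecMul := by
    refine (rank_eq_card_height_iff V).1 (le_antisymm (rank_le_card_height V) ?_)
    simpa [← hUV, hM] using rank_mul_le_right U V
  rw [← fromRows_toRows U, ← fromRows_toRows U.toRows₁] at hU hUV
  rw [← fromCols_toCols V] at hV hUV
  rw [fromRows_fromRows_mul_fromCols, block32_inj] at hUV
  refine ⟨_, _, _, _, _, fun y h1 h2 h3 => hU ?_, fun x h1 h2 => hV ?_, hUV⟩
  · rw [mulVec_zero, fromRows_mulVec, fromRows_mulVec, h1, h2, h3, Sum.elim_zero_zero,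
      Sum.elim_zero_zero]
  · change x ᵥ* _ = 0 ᵥ* _
    rw [zero_vecMul, vecMul_fromCols, h1, h2, Sum.elim_zero_zero]

end Block32

def IsUniqueLowRankCompletion {m1 m2 m3 n1 n2 : ℕ} (r : ℕ)
    (E : Matrix (Fin m1) (Fin n1) ℝ) (F : Matrix (Fin m1) (Fin n2) ℝ)
    (A : Matrix (Fin m2) (Fin n1) ℝ) (B : Matrix (Fin m2) (Fin n2) ℝ)
    (C : Matrix (Fin m3) (Fin n1) ℝ) (D : Matrix (Fin m3) (Fin n2) ℝ) : Prop :=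
  ∀ (E' : Matrix (Fin m1) (Fin n1) ℝ) (D' : Matrix (Fin m3) (Fin n2) ℝ),
    (block32 E' F A B C D').rank ≤ r → E' = E ∧ D' = D

namespace IsUniqueLowRankCompletion

variable {m1 m2 m3 n1 n2 r : ℕ}
  {E : Matrix (Fin m1) (Fin n1) ℝ} {F : Matrix (Fin m1) (Fin n2) ℝ}
  {A : Matrix (Fin m2) (Fin n1) ℝ} {B : Matrix (Fin m2) (Fin n2) ℝ}
  {C : Matrix (Fin m3) (Fin n1) ℝ} {D : Matrix (Fin m3) (Fin n2) ℝ}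

theorem flip (h : IsUniqueLowRankCompletion r E F A B C D) :
    IsUniqueLowRankCompletion r D C B A F E :=
  fun D' E' h' => (h E' D' (rank_block32_flip.symm.trans_le h')).symm

theorem eq_of_factors (h : IsUniqueLowRankCompletion r E F A B C D)
    {U1 : Matrix (Fin m1) (Fin r) ℝ} {U2 : Matrix (Fin m2) (Fin r) ℝ}
    {U3 : Matrix (Fin m3) (Fin r) ℝ} {V1 : Matrix (Fin r) (Fin n1) ℝ}
    {V2 : Matrix (Fin r) (Fin n2) ℝ}
    (hF : U1 * V2 = F) (hA : U2 * V1 = A) (hB : U2 * V2 = B) (hC : U3 * V1 = C) :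
    U1 * V1 = E ∧ U3 * V2 = D := by
  refine h _ _ ?_
  rw [← hF, ← hA, ← hB, ← hC, ← fromRows_fromRows_mul_fromCols]
  exact (rank_mul_le_left _ _).trans ((rank_le_card_width _).trans_eq (Fintype.card_fin r))

section Factors

variable {U1 : Matrix (Fin m1) (Fin r) ℝ} {U2 : Matrix (Fin m2) (Fin r) ℝ}
  {U3 : Matrix (Fin m3) (Fin r) ℝ} {V1 : Matrix (Fin r) (Fin n1) ℝ}
  {V2 : Matrix (Fin r) (Fin n2) ℝ}

theorem eq_zero_of_vecMul_eq_zero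
    (h : IsUniqueLowRankCompletion r (U1 * V1) (U1 * V2) (U2 * V1) (U2 * V2) (U3 * V1) (U3 * V2))
    (hm3 : 0 < m3) (hV : ∀ x, x ᵥ* V1 = 0 → x ᵥ* V2 = 0 → x = 0)
    {x : Fin r → ℝ} (hx : x ᵥ* V1 = 0) : x = 0 := by
  have : Nonempty (Fin m3) := ⟨⟨0, hm3⟩⟩
  have hC : (U3 + vecMulVec 1 x) * V1 = U3 * V1 := by
    rw [Matrix.add_mul, add_eq_left, vecMulVec_mul, hx, vecMulVec_eq_zero_iff]
    exact Or.inr rfl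
  have hD := (h.eq_of_factors rfl rfl rfl hC).2
  rw [Matrix.add_mul, add_eq_left, vecMulVec_mul, vecMulVec_eq_zero_iff] at hD
  exact hV x hx (hD.resolve_left one_ne_zero)

theorem eq_zero_of_mulVec_eq_zero
    (h : IsUniqueLowRankCompletion r (U1 * V1) (U1 * V2) (U2 * V1) (U2 * V2) (U3 * V1) (U3 * V2))
    (hn2 : 0 < n2) (hU : ∀ y, U1 *ᵥ y = 0 → U2 *ᵥ y = 0 → U3 *ᵥ y = 0 → y = 0)
    (hV1 : ∀ x, x ᵥ* V1 = 0 → x = 0) {y : Fin r → ℝ} (hy : U2 *ᵥ y = 0) : y = 0 := by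
  by_cases ha : U1 *ᵥ y = 0
  · have : Nonempty (Fin n2) := ⟨⟨0, hn2⟩⟩
    have hD := (h.eq_of_factors (V2 := V2 + vecMulVec y 1)
      (by rw [Matrix.mul_add, mul_vecMulVec, ha, zero_vecMulVec, add_zero]) rfl
      (by rw [Matrix.mul_add, mul_vecMulVec, hy, zero_vecMulVec, add_zero]) rfl).2
    rw [Matrix.mul_add, add_eq_left, mul_vecMulVec, vecMulVec_eq_zero_iff] at hD
    exact hU y ha hy (hD.resolve_right one_ne_zero)
  · have hpos : 1 + y ⬝ᵥ y ≠ 0 := by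
      have := dotProduct_self_star_nonneg y
      rw [star_trivial] at this
      positivity
    -- `z` is chosen so that the two corrections of `C` cancel
    set z := -((1 + y ⬝ᵥ y)⁻¹ • (y ᵥ* V1)) with hz
    have hC : (U3 + vecMulVec (U3 *ᵥ y) y) * (V1 + vecMulVec y z) = U3 * V1 := by
      have key : (1 + y ⬝ᵥ y) • z + y ᵥ* V1 = 0 := by
        rw [hz, smul_neg, smul_smul, mul_inv_cancel₀ hpos, one_smul, neg_add_cancel]
      calc _ = U3 * V1 + vecMulVec (U3 *ᵥ y) ((1 + y ⬝ᵥ y) • z + y ᵥ* V1) := by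
            rw [Matrix.add_mul, Matrix.mul_add, Matrix.mul_add, mul_vecMulVec, vecMulVec_mul,
              vecMulVec_mul_vecMulVec, add_smul, one_smul, vecMulVec_add, vecMulVec_add]
            abel
        _ = U3 * V1 := by rw [key, add_eq_left, vecMulVec_eq_zero_iff]; exact Or.inr rfl
    have hE := (h.eq_of_factors rfl
      (by rw [Matrix.mul_add, mul_vecMulVec, hy, zero_vecMulVec, add_zero]) rfl hC).1
    rw [Matrix.mul_add, add_eq_left, mul_vecMulVec, vecMulVec_eq_zero_iff, hz] at hE
    exact hV1 y (by simpa [hpos] using hE.resolve_left ha)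

end Factors

theorem rank_middle_left_eq (h : IsUniqueLowRankCompletion r E F A B C D) (hm3 : 0 < m3)
    (hn2 : 0 < n2) (hM : (block32 E F A B C D).rank = r) : A.rank = r := by
  obtain ⟨U1, U2, U3, V1, V2, hU, hV, rfl, rfl, rfl, rfl, rfl, rfl⟩ :=
    exists_block32_factorization hM
  have hV1 (x) := h.eq_zero_of_vecMul_eq_zero hm3 hV (x := x)
  have hU2 (y) := h.eq_zero_of_mulVec_eq_zero hn2 hU hV1 (y := y)
  rw [rank_mul_eq_right_of_mulVec_injective _ _ ((injective_iff_map_eq_zero U2.mulVecLin).2 hU2)]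
  simpa using (rank_eq_card_height_iff V1).2 ((injective_iff_map_eq_zero V1.vecMulLinear).2 hV1)

end IsUniqueLowRankCompletion

theorem isUniqueLowRankCompletion_of_rank_eq {m1 m2 m3 n1 n2 r : ℕ}
    {E : Matrix (Fin m1) (Fin n1) ℝ} {F : Matrix (Fin m1) (Fin n2) ℝ}
    {A : Matrix (Fin m2) (Fin n1) ℝ} {B : Matrix (Fin m2) (Fin n2) ℝ}
    {C : Matrix (Fin m3) (Fin n1) ℝ} {D : Matrix (Fin m3) (Fin n2) ℝ}
    (hM : (block32 E F A B C D).rank = r) (hA : A.rank = r) (hB : B.rank = r) :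
    IsUniqueLowRankCompletion r E F A B C D := fun _ _ h =>
  ⟨eq_of_rank_block32_le hM hB h,
    eq_of_rank_block32_le (rank_block32_flip.trans hM) hA (rank_block32_flip.trans_le h)⟩

theorem three_biclique_unique_iff_general {m1 m2 m3 n1 n2 r : ℕ}
    (hm1 : 0 < m1) (hm3 : 0 < m3) (hn1 : 0 < n1) (hn2 : 0 < n2)
    (E : Matrix (Fin m1) (Fin n1) ℝ) (F : Matrix (Fin m1) (Fin n2) ℝ)
    (A : Matrix (Fin m2) (Fin n1) ℝ) (B : Matrix (Fin m2) (Fin n2) ℝ)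
    (C : Matrix (Fin m3) (Fin n1) ℝ) (D : Matrix (Fin m3) (Fin n2) ℝ)
    (hM : (block32 E F A B C D).rank = r) :
    (∀ (E' : Matrix (Fin m1) (Fin n1) ℝ) (D' : Matrix (Fin m3) (Fin n2) ℝ),
        (block32 E' F A B C D').rank ≤ r → E' = E ∧ D' = D) ↔
      A.rank = r ∧ B.rank = r := by
  refine ⟨fun h => ⟨?_, ?_⟩, fun ⟨hA, hB⟩ => isUniqueLowRankCompletion_of_rank_eq hM hA hB⟩
  · exact IsUniqueLowRankCompletion.rank_middle_left_eq h hm3 hn2 hM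
  · exact IsUniqueLowRankCompletion.rank_middle_left_eq (IsUniqueLowRankCompletion.flip h) hm1 hn1
      (rank_block32_flip.trans hM)

/-- For `M = [[E,F],[A,B],[C,D]]` of rank `r` with `A, B, C, F` fixed, the completion
is unique iff `rank A = r` and `rank B = r`. -/
theorem three_biclique_unique_iff {m1 m2 m3 n1 n2 r : ℕ}
    (hm1 : 0 < m1) (hm2 : 0 < m2) (hm3 : 0 < m3) (hn1 : 0 < n1) (hn2 : 0 < n2) (hr : 1 ≤ r)
    (E : Matrix (Fin m1) (Fin n1) ℝ) (F : Matrix (Fin m1) (Fin n2) ℝ)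
    (A : Matrix (Fin m2) (Fin n1) ℝ) (B : Matrix (Fin m2) (Fin n2) ℝ)
    (C : Matrix (Fin m3) (Fin n1) ℝ) (D : Matrix (Fin m3) (Fin n2) ℝ)
    (hM : (block32 E F A B C D).rank = r) :
    (∀ (E' : Matrix (Fin m1) (Fin n1) ℝ) (D' : Matrix (Fin m3) (Fin n2) ℝ),
        (block32 E' F A B C D').rank ≤ r → E' = E ∧ D' = D) ↔
      A.rank = r ∧ B.rank = r :=
  three_biclique_unique_iff_general hm1 hm3 hn1 hn2 E F A B C D hM
end

section
/- (Sufficiency direction) Let M = [[E, F], [A, B], [C, D]] be a real matrix of rank r with A, B, C, F fixed. If rank(A) = r and rank(B) = r, then E and D are uniquely determined among all completions of rank at most r. -/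
/-!
Since `rank A = rank B = r` and `[A B]` is a block row of `M`, the columns of `A`, of `B` and of
`[A B]` span the same space, so `A = B W` and `B = A V` for some `W`, `V`. If a completion `M'`
has rank at most `r`, its rows all lie in the row space of its block row `[A B]`; in particular
`[E' F] = X [A B]` and `[C D'] = Y [A B]`, whence `E' = X B W = F W` and `D' = Y A V = C V`.
These expressions do not involve `E'` or `D'`, and they hold for `M` itself as well.
-/

open Matrix

namespace Matrix

variable {K m m₀ n n₀ : Type*} [Field K] [Fintype m] [Fintype m₀] [Fintype n] [Fintype n₀]

theorem exists_mul_submatrix_eq_of_rank_le (M : Matrix m n K) (g : m₀ → m)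
    (h : M.rank ≤ (M.submatrix g id).rank) : ∃ X : Matrix m m₀ K, X * M.submatrix g id = M := by
  have hspan : Submodule.span K (Set.range (M.submatrix g id).row) =
      Submodule.span K (Set.range M.row) := by
    refine Submodule.eq_of_le_of_finrank_le
      (Submodule.span_mono (Set.range_comp_subset_range g M)) ?_
    rwa [← rank_eq_finrank_span_row, ← rank_eq_finrank_span_row]
  have hrow : ∀ i, ∃ c : m₀ → K, ∑ k, c k • (M.submatrix g id).row k = M.row i := fun i =>
    (Submodule.mem_span_range_iff_exists_fun K).1 (hspan ▸ Submodule.subset_span ⟨i, rfl⟩)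
  choose X hX using hrow
  exact ⟨of X, funext fun i => (vecMul_eq_sum _ _).trans (hX i)⟩

theorem exists_submatrix_mul_eq_of_rank_le (M : Matrix m n K) (g : n₀ → n)
    (h : M.rank ≤ (M.submatrix id g).rank) : ∃ Y : Matrix n₀ n K, M.submatrix id g * Y = M := by
  obtain ⟨X, hX⟩ := Mᵀ.exists_mul_submatrix_eq_of_rank_le g
    (by rwa [rank_transpose, ← transpose_submatrix, rank_transpose])
  exact ⟨Xᵀ, by simpa [transpose_mul, transpose_submatrix] using congrArg transpose hX⟩

end Matrix

theorem block32_corners_eq_of_rank_le {m1 m2 m3 n1 n2 : ℕ}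
    {E : Matrix (Fin m1) (Fin n1) ℝ} {F : Matrix (Fin m1) (Fin n2) ℝ}
    {A : Matrix (Fin m2) (Fin n1) ℝ} {B : Matrix (Fin m2) (Fin n2) ℝ}
    {C : Matrix (Fin m3) (Fin n1) ℝ} {D : Matrix (Fin m3) (Fin n2) ℝ}
    {W : Matrix (Fin n2) (Fin n1) ℝ} {V : Matrix (Fin n1) (Fin n2) ℝ}
    (hW : B * W = A) (hV : A * V = B)
    (h : (block32 E F A B C D).rank ≤ (fromCols A B).rank) : E = F * W ∧ D = C * V := by
  obtain ⟨X, hX⟩ := (block32 E F A B C D).exists_mul_submatrix_eq_of_rank_le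
    (Sum.inl ∘ Sum.inr) h
  set X₁ := X.submatrix (Sum.inl ∘ Sum.inl) id
  set X₃ := X.submatrix Sum.inr id
  have hE : X₁ * A = E := by
    ext i j; exact congrFun (congrFun hX (.inl (.inl i))) (.inl j)
  have hF : X₁ * B = F := by
    ext i j; exact congrFun (congrFun hX (.inl (.inl i))) (.inr j)
  have hC : X₃ * A = C := by
    ext i j; exact congrFun (congrFun hX (.inr i)) (.inl j)
  have hD : X₃ * B = D := by
    ext i j; exact congrFun (congrFun hX (.inr i)) (.inr j)
  constructor
  · rw [← hE, ← hF, ← hW, Matrix.mul_assoc]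
  · rw [← hD, ← hC, ← hV, Matrix.mul_assoc]

/-- Sufficiency: if `rank A = r` and `rank B = r`, the blocks `E` and `D` are uniquely
determined among rank-`≤ r` completions. -/
theorem three_biclique_unique_of_rank {m1 m2 m3 n1 n2 r : ℕ}
    (E : Matrix (Fin m1) (Fin n1) ℝ) (F : Matrix (Fin m1) (Fin n2) ℝ)
    (A : Matrix (Fin m2) (Fin n1) ℝ) (B : Matrix (Fin m2) (Fin n2) ℝ)
    (C : Matrix (Fin m3) (Fin n1) ℝ) (D : Matrix (Fin m3) (Fin n2) ℝ)
    (hM : (block32 E F A B C D).rank = r) (hA : A.rank = r) (hB : B.rank = r) :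
    ∀ (E' : Matrix (Fin m1) (Fin n1) ℝ) (D' : Matrix (Fin m3) (Fin n2) ℝ),
      (block32 E' F A B C D').rank ≤ r → E' = E ∧ D' = D := by
  have hAB : (fromCols A B).rank ≤ r :=
    hM ▸ rank_submatrix_le (block32 E F A B C D) (Sum.inl ∘ Sum.inr) id
  obtain ⟨Y, hY⟩ := (fromCols A B).exists_submatrix_mul_eq_of_rank_le Sum.inr (hAB.trans hB.ge)
  obtain ⟨Z, hZ⟩ := (fromCols A B).exists_submatrix_mul_eq_of_rank_le Sum.inl (hAB.trans hA.ge)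
  have hW : B * Y.submatrix id Sum.inl = A := congrArg (submatrix · id Sum.inl) hY
  have hV : A * Z.submatrix id Sum.inr = B := congrArg (submatrix · id Sum.inr) hZ
  have hr : r ≤ (fromCols A B).rank := hB ▸ rank_submatrix_le (fromCols A B) id Sum.inr
  intro E' D' h'
  obtain ⟨hE', hD'⟩ := block32_corners_eq_of_rank_le hW hV (h'.trans hr)
  obtain ⟨hE, hD⟩ := block32_corners_eq_of_rank_le hW hV (hM.le.trans hr)
  exact ⟨hE'.trans hE.symm, hD'.trans hD.symm⟩
end

section
/- Let M = [[F, H, E], [A, G, B], [C, K, D]] be a real matrix of rank r where the blocks A, B, C, E, G are fixed (and F, H, K, D are unknown). Then M is the unique rank-≤-r matrix with those fixed blocks if and only if rank(A) = r and rank(B) = r. -/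
/-!
Write `P = [A G B]` for the middle block row. If `rank A = rank B = r`, then in any completion of
rank at most `r` the rows of `P` span the row space, and a vector of that row space is determined
by its entries under `B`, and also by its entries under `A`; so the top rows are pinned down by
`E` and the bottom rows by `C`. Conversely, each failure gives a rank-non-increasing move that only
touches unknown entries: if `rank P < r`, add to a middle-block column a vector of the column space
vanishing on the middle rows; if `rank A < rank P`, add to a bottom row a combination of the rows
of `P` vanishing under `A` (and symmetrically a top row when `rank B < rank P`).
-/

open Matrix

namespace Matrix

variable {K : Type*} [Field K] {k l m n : Type*} [Fintype n]

def IsUniqueCompletion (M : Matrix m n K) (known : m → n → Prop) (r : ℕ) : Prop :=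
  ∀ N : Matrix m n K, N.rank ≤ r → (∀ i j, known i j → N i j = M i j) → N = M

theorem rank_le_rank_submatrix_rows_iff (M : Matrix m n K) (f : k → m) :
    M.rank ≤ (M.submatrix f id).rank ↔
      ∀ z, (∀ i, (M *ᵥ z) (f i) = 0) → M *ᵥ z = 0 := by
  have hker : LinearMap.ker M.mulVecLin ≤ LinearMap.ker (M.submatrix f id).mulVecLin :=
    fun z hz => funext fun i => congrFun (LinearMap.mem_ker.1 hz) (f i)
  have hM := M.mulVecLin.finrank_range_add_finrank_ker
  have hMf := (M.submatrix f id).mulVecLin.finrank_range_add_finrank_ker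
  change M.rank + _ = _ at hM
  change (M.submatrix f id).rank + _ = _ at hMf
  constructor
  · intro hrank z hz
    have hker_eq := Submodule.eq_of_le_of_finrank_le hker (by omega)
    have hz' : z ∈ LinearMap.ker (M.submatrix f id).mulVecLin := funext hz
    rwa [← hker_eq] at hz'
  · intro himp
    have := Submodule.finrank_mono (show LinearMap.ker (M.submatrix f id).mulVecLin ≤
      LinearMap.ker M.mulVecLin from fun z hz => himp z (congrFun hz))
    omega

theorem rank_le_rank_submatrix_cols_iff [Fintype m] [Fintype l] (M : Matrix m n K) (g : l → n) :
    M.rank ≤ (M.submatrix id g).rank ↔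
      ∀ v, (∀ j, (v ᵥ* M) (g j) = 0) → v ᵥ* M = 0 := by
  simpa only [← rank_transpose M, ← rank_transpose (M.submatrix id g), transpose_submatrix,
    mulVec_transpose] using rank_le_rank_submatrix_rows_iff Mᵀ g

theorem exists_vecMul_submatrix_eq_row [Fintype m] [Fintype k] (M : Matrix m n K) (f : k → m)
    (h : M.rank ≤ (M.submatrix f id).rank) (i : m) : ∃ x, x ᵥ* M.submatrix f id = M i := by
  have hle : Submodule.span K (Set.range (M.submatrix f id).row) ≤
      Submodule.span K (Set.range M.row) :=
    Submodule.span_mono (Set.range_comp_subset_range f M.row)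
  have heq := Submodule.eq_of_le_of_finrank_le hle
    (by rwa [← rank_eq_finrank_span_row, ← rank_eq_finrank_span_row])
  show M i ∈ LinearMap.range (M.submatrix f id).vecMulLinear
  rw [range_vecMulLinear, heq]
  exact Submodule.subset_span ⟨i, rfl⟩

theorem rank_add_vecMulVec_mulVec_le (M : Matrix m n K) (z w : n → K) :
    (M + vecMulVec (M *ᵥ z) w).rank ≤ M.rank := by
  classical
  have : M + vecMulVec (M *ᵥ z) w = M * (1 + vecMulVec z w) := by
    rw [Matrix.mul_add, Matrix.mul_one, mul_vecMulVec]
  rw [this]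
  exact rank_mul_le_left M _

theorem rank_add_vecMulVec_vecMul_le [Fintype m] (M : Matrix m n K) (u w : m → K) :
    (M + vecMulVec u (w ᵥ* M)).rank ≤ M.rank := by
  classical
  have : M + vecMulVec u (w ᵥ* M) = (1 + vecMulVec u w) * M := by
    rw [Matrix.add_mul, Matrix.one_mul, vecMulVec_mul]
  rw [this]
  exact rank_mul_le_right _ M

theorem exists_ne_rank_le_of_rank_submatrix_rows_lt (M : Matrix m n K) (f : k → m)
    (h : (M.submatrix f id).rank < M.rank) (j₀ : n) :
    ∃ N : Matrix m n K, N.rank ≤ M.rank ∧ N ≠ M ∧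
      ∀ i j, N i j ≠ M i j → i ∉ Set.range f ∧ j = j₀ := by
  classical
  obtain ⟨z, hzf, hz⟩ : ∃ z, (∀ i, (M *ᵥ z) (f i) = 0) ∧ M *ᵥ z ≠ 0 := by
    simpa using (rank_le_rank_submatrix_rows_iff M f).not.1 h.not_ge
  refine ⟨M + vecMulVec (M *ᵥ z) (Pi.single j₀ 1), rank_add_vecMulVec_mulVec_le M z _,
    fun hN => hz ?_, fun i j hne => ⟨?_, by_contra fun hj => hne ?_⟩⟩
  · ext i
    simpa [vecMulVec_apply] using congrFun (congrFun hN i) j₀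
  · rintro ⟨i, rfl⟩
    exact hne (by simp [vecMulVec_apply, hzf i])
  · simp [vecMulVec_apply, hj]

theorem exists_ne_rank_le_of_rank_submatrix_cols_lt [Fintype m] [Fintype k] [Fintype l]
    (M : Matrix m n K) (f : k → m) (g : l → n)
    (h : (M.submatrix f g).rank < (M.submatrix f id).rank) (i₀ : m) :
    ∃ N : Matrix m n K, N.rank ≤ M.rank ∧ N ≠ M ∧
      ∀ i j, N i j ≠ M i j → i = i₀ ∧ j ∉ Set.range g := by
  classical
  obtain ⟨v, hvg, hv⟩ :
      ∃ v, (∀ j, (v ᵥ* M.submatrix f id) (g j) = 0) ∧ v ᵥ* M.submatrix f id ≠ 0 := by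
    simpa using (rank_le_rank_submatrix_cols_iff _ g).not.1 h.not_ge
  obtain ⟨w, hw⟩ : v ᵥ* M.submatrix f id ∈ LinearMap.range M.vecMulLinear := by
    rw [range_vecMulLinear]
    refine Submodule.span_mono (Set.range_comp_subset_range f M.row) ?_
    have hv := LinearMap.mem_range_self (M.submatrix f id).vecMulLinear v
    rwa [range_vecMulLinear] at hv
  change w ᵥ* M = _ at hw
  refine ⟨M + vecMulVec (Pi.single i₀ 1) (w ᵥ* M), rank_add_vecMulVec_vecMul_le M _ w,
    fun hN => hv ?_, fun i j hne => ⟨by_contra fun hi => hne ?_, ?_⟩⟩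
  · ext j
    simpa [vecMulVec_apply, hw] using congrFun (congrFun hN i₀) j
  · simp [vecMulVec_apply, hi]
  · rintro ⟨j, rfl⟩
    exact hne (by simp [vecMulVec_apply, hw, hvg j])

theorem row_eq_of_rank_le_rank_submatrix [Fintype m] [Fintype k] [Fintype l]
    {M N : Matrix m n K} (f : k → m) (g : l → n) (hf : ∀ i, N (f i) = M (f i))
    (hM : M.rank ≤ (M.submatrix f g).rank) (hN : N.rank ≤ (M.submatrix f g).rank)
    (i : m) (hi : ∀ j, N i (g j) = M i (g j)) : N i = M i := by
  have hNf : N.submatrix f id = M.submatrix f id := funext hf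
  have hsub : (M.submatrix f id).submatrix id g = M.submatrix f g := submatrix_submatrix ..
  have hPg : (M.submatrix f g).rank ≤ (M.submatrix f id).rank :=
    hsub ▸ rank_submatrix_le (M.submatrix f id) id g
  obtain ⟨x, hx⟩ := exists_vecMul_submatrix_eq_row M f (hM.trans hPg) i
  obtain ⟨y, hy⟩ := exists_vecMul_submatrix_eq_row N f (hNf ▸ hN.trans hPg) i
  rw [hNf] at hy
  have hP : (M.submatrix f id).rank ≤ ((M.submatrix f id).submatrix id g).rank :=
    hsub ▸ (rank_submatrix_le M f id).trans hM
  have hxy : (y - x) ᵥ* M.submatrix f id = 0 :=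
    (rank_le_rank_submatrix_cols_iff _ g).1 hP _ fun j => by
      simp only [sub_vecMul, Pi.sub_apply, hx, hy, hi, sub_self]
  rw [← hx, ← hy, ← sub_eq_zero, ← sub_vecMul, hxy]

end Matrix

section Block3

variable {m1 m2 m3 n1 n2 n3 : ℕ}

def Block3Known : (Fin m1 ⊕ Fin m2) ⊕ Fin m3 → (Fin n1 ⊕ Fin n2) ⊕ Fin n3 → Prop
  | .inl (.inr _), _ => True
  | .inl (.inl _), .inr _ => True
  | .inr _, .inl (.inl _) => True
  | _, _ => False

variable (F : Matrix (Fin m1) (Fin n1) ℝ) (H : Matrix (Fin m1) (Fin n2) ℝ)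
    (E : Matrix (Fin m1) (Fin n3) ℝ)
    (A : Matrix (Fin m2) (Fin n1) ℝ) (G : Matrix (Fin m2) (Fin n2) ℝ)
    (B : Matrix (Fin m2) (Fin n3) ℝ)
    (C : Matrix (Fin m3) (Fin n1) ℝ) (K : Matrix (Fin m3) (Fin n2) ℝ)
    (D : Matrix (Fin m3) (Fin n3) ℝ)

theorem block3_submatrix_mid_left :
    (block3 F H E A G B C K D).submatrix (Sum.inl ∘ Sum.inr) (Sum.inl ∘ Sum.inl) = A := by
  ext; simp [block3]

theorem block3_submatrix_mid_right :
    (block3 F H E A G B C K D).submatrix (Sum.inl ∘ Sum.inr) Sum.inr = B := by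
  ext; simp [block3]

theorem block3_completion_unique_iff (r : ℕ) :
    (∀ (F' : Matrix (Fin m1) (Fin n1) ℝ) (H' : Matrix (Fin m1) (Fin n2) ℝ)
        (K' : Matrix (Fin m3) (Fin n2) ℝ) (D' : Matrix (Fin m3) (Fin n3) ℝ),
        (block3 F' H' E A G B C K' D').rank ≤ r → F' = F ∧ H' = H ∧ K' = K ∧ D' = D) ↔
      (block3 F H E A G B C K D).IsUniqueCompletion Block3Known r := by
  constructor
  · intro huniq N hN hknown
    have hN_eq : N = block3 (N.submatrix (Sum.inl ∘ Sum.inl) (Sum.inl ∘ Sum.inl))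
        (N.submatrix (Sum.inl ∘ Sum.inl) (Sum.inl ∘ Sum.inr)) E A G B C
        (N.submatrix Sum.inr (Sum.inl ∘ Sum.inr)) (N.submatrix Sum.inr Sum.inr) := by
      ext ((i | i) | i) ((j | j) | j) <;>
        first | rfl | exact (hknown _ _ (by simp [Block3Known])).trans (by simp [block3])
    obtain ⟨hF, hH, hK, hD⟩ := huniq _ _ _ _ (hN_eq ▸ hN)
    rwa [hF, hH, hK, hD] at hN_eq
  · intro huniq F' H' K' D' hN
    have hN_eq := huniq _ hN (by rintro ((i | i) | i) ((j | j) | j) h <;> first | rfl | cases h)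
    simpa [block3, fromBlocks_inj, fromRows_inj.eq_iff, fromCols_inj.eq_iff, and_assoc] using hN_eq

variable {F H E A G B C K D} {r : ℕ}

theorem rank_eq_of_isUniqueCompletion_block3 (hm1 : 0 < m1) (hm3 : 0 < m3) (hn2 : 0 < n2)
    (hM : (block3 F H E A G B C K D).rank = r)
    (huniq : (block3 F H E A G B C K D).IsUniqueCompletion Block3Known r) :
    A.rank = r ∧ B.rank = r := by
  set M := block3 F H E A G B C K D
  have hsubA := block3_submatrix_mid_left F H E A G B C K D
  have hsubB := block3_submatrix_mid_right F H E A G B C K D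
  have hP : (M.submatrix (Sum.inl ∘ Sum.inr) id).rank ≤ r := hM ▸ rank_submatrix_le M _ id
  have eq_of_agrees : ∀ N, N.rank ≤ M.rank →
      (∀ i j, N i j ≠ M i j → ¬Block3Known i j) → N = M := fun N hN hdiff =>
    huniq N (hM ▸ hN) fun i j hij => not_not.1 fun hne => hdiff i j hne hij
  have hPr : (M.submatrix (Sum.inl ∘ Sum.inr) id).rank = r := by
    refine hP.antisymm (not_lt.1 fun hlt => ?_)
    obtain ⟨N, hNr, hNM, hdiff⟩ :=
      exists_ne_rank_le_of_rank_submatrix_rows_lt M _ (hM ▸ hlt) (Sum.inl (Sum.inr ⟨0, hn2⟩))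
    refine hNM (eq_of_agrees N hNr fun i j hne => ?_)
    obtain ⟨hi, rfl⟩ := hdiff i j hne
    rcases i with (i | i) | i <;> first | exact id | exact absurd ⟨i, rfl⟩ hi
  constructor
  · refine ((hsubA ▸ rank_submatrix_le M _ _).trans hM.le).antisymm (not_lt.1 fun hlt => ?_)
    obtain ⟨N, hNr, hNM, hdiff⟩ := exists_ne_rank_le_of_rank_submatrix_cols_lt M _ _
      (hsubA ▸ hPr ▸ hlt) (Sum.inr ⟨0, hm3⟩)
    refine hNM (eq_of_agrees N hNr fun i j hne => ?_)
    obtain ⟨rfl, hj⟩ := hdiff i j hne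
    rcases j with (j | j) | j <;> first | exact id | exact absurd ⟨j, rfl⟩ hj
  · refine ((hsubB ▸ rank_submatrix_le M _ _).trans hM.le).antisymm (not_lt.1 fun hlt => ?_)
    obtain ⟨N, hNr, hNM, hdiff⟩ := exists_ne_rank_le_of_rank_submatrix_cols_lt M _ _
      (hsubB ▸ hPr ▸ hlt) (Sum.inl (Sum.inl ⟨0, hm1⟩))
    refine hNM (eq_of_agrees N hNr fun i j hne => ?_)
    obtain ⟨rfl, hj⟩ := hdiff i j hne
    rcases j with (j | j) | j <;> first | exact id | exact absurd ⟨j, rfl⟩ hj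

theorem isUniqueCompletion_block3_of_rank_eq (hA : A.rank = r) (hB : B.rank = r)
    (hM : (block3 F H E A G B C K D).rank = r) :
    (block3 F H E A G B C K D).IsUniqueCompletion Block3Known r := by
  set M := block3 F H E A G B C K D
  intro N hN hknown
  have hmid : ∀ i, N (Sum.inl (Sum.inr i)) = M (Sum.inl (Sum.inr i)) :=
    fun i => funext fun j => hknown _ j trivial
  funext i
  rcases i with (i | i) | i
  · refine row_eq_of_rank_le_rank_submatrix (Sum.inl ∘ Sum.inr) Sum.inr hmid ?_ ?_ _
      fun j => hknown (Sum.inl (Sum.inl i)) (Sum.inr j) trivial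
    all_goals rw [block3_submatrix_mid_right, hB]
    exacts [hM.le, hN]
  · exact hmid i
  · refine row_eq_of_rank_le_rank_submatrix (Sum.inl ∘ Sum.inr) (Sum.inl ∘ Sum.inl) hmid
      ?_ ?_ _ fun j => hknown (Sum.inr i) (Sum.inl (Sum.inl j)) trivial
    all_goals rw [block3_submatrix_mid_left, hA]
    exacts [hM.le, hN]

end Block3

theorem three_by_three_unique_iff_general {m1 m2 m3 n1 n2 n3 r : ℕ}
    (hm1 : 0 < m1) (hm3 : 0 < m3)
    (hn2 : 0 < n2)
    (F : Matrix (Fin m1) (Fin n1) ℝ) (H : Matrix (Fin m1) (Fin n2) ℝ)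
    (E : Matrix (Fin m1) (Fin n3) ℝ)
    (A : Matrix (Fin m2) (Fin n1) ℝ) (G : Matrix (Fin m2) (Fin n2) ℝ)
    (B : Matrix (Fin m2) (Fin n3) ℝ)
    (C : Matrix (Fin m3) (Fin n1) ℝ) (K : Matrix (Fin m3) (Fin n2) ℝ)
    (D : Matrix (Fin m3) (Fin n3) ℝ)
    (hM : (block3 F H E A G B C K D).rank = r) :
    (∀ (F' : Matrix (Fin m1) (Fin n1) ℝ) (H' : Matrix (Fin m1) (Fin n2) ℝ)
        (K' : Matrix (Fin m3) (Fin n2) ℝ) (D' : Matrix (Fin m3) (Fin n3) ℝ),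
        (block3 F' H' E A G B C K' D').rank ≤ r →
          F' = F ∧ H' = H ∧ K' = K ∧ D' = D) ↔
      A.rank = r ∧ B.rank = r := by
  rw [block3_completion_unique_iff]
  exact ⟨rank_eq_of_isUniqueCompletion_block3 hm1 hm3 hn2 hM,
    fun ⟨hA, hB⟩ => isUniqueCompletion_block3_of_rank_eq hA hB hM⟩

/-- For `M = [[F,H,E],[A,G,B],[C,K,D]]` of rank `r` with `A, B, C, E, G` fixed and
`F, H, K, D` unknown, the completion is unique iff `rank A = r` and `rank B = r`. -/
theorem three_by_three_unique_iff {m1 m2 m3 n1 n2 n3 r : ℕ}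
    (hm1 : 0 < m1) (hm2 : 0 < m2) (hm3 : 0 < m3)
    (hn1 : 0 < n1) (hn2 : 0 < n2) (hn3 : 0 < n3) (hr : 1 ≤ r)
    (F : Matrix (Fin m1) (Fin n1) ℝ) (H : Matrix (Fin m1) (Fin n2) ℝ)
    (E : Matrix (Fin m1) (Fin n3) ℝ)
    (A : Matrix (Fin m2) (Fin n1) ℝ) (G : Matrix (Fin m2) (Fin n2) ℝ)
    (B : Matrix (Fin m2) (Fin n3) ℝ)
    (C : Matrix (Fin m3) (Fin n1) ℝ) (K : Matrix (Fin m3) (Fin n2) ℝ)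
    (D : Matrix (Fin m3) (Fin n3) ℝ)
    (hM : (block3 F H E A G B C K D).rank = r) :
    (∀ (F' : Matrix (Fin m1) (Fin n1) ℝ) (H' : Matrix (Fin m1) (Fin n2) ℝ)
        (K' : Matrix (Fin m3) (Fin n2) ℝ) (D' : Matrix (Fin m3) (Fin n3) ℝ),
        (block3 F' H' E A G B C K' D').rank ≤ r →
          F' = F ∧ H' = H ∧ K' = K ∧ D' = D) ↔
      A.rank = r ∧ B.rank = r :=
  three_by_three_unique_iff_general hm1 hm3 hn2 F H E A G B C K D hM
end

section
/- Let M be a real symmetric matrix partitioned as M = [[A, B], [Bᵀ, C]] with A and C square. Then M is positive semidefinite if and only if A is positive semidefinite, Range(B) ⊆ Range(A), and the generalized Schur complement M/A = C - Bᵀ A⁺ B is positive semidefinite. -/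
/-!
If `A * A⁺ * B = B`, then `M = Lᵀ * fromBlocks A 0 0 (M/A) * L` with the unitriangular
`L = fromBlocks 1 (A⁺ * B) 0 1` (this needs `A⁺` symmetric, which follows from uniqueness of the
pseudoinverse), so `M` is positive semidefinite iff `A` and `M/A` are. The condition
`A * A⁺ * B = B` is the range inclusion, and `M ⪰ 0` forces it: if `A x = 0` then `(x, 0)` is
isotropic for `M`, hence lies in its kernel, so `Bᵀ x = 0`; applied to the columns of `1 - A⁺ * A`
this gives `Bᵀ * A⁺ * A = Bᵀ`.
-/

open Matrix

namespace IsMPInv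

variable {p q : ℕ} {A : Matrix (Fin p) (Fin q) ℝ} {P Q : Matrix (Fin q) (Fin p) ℝ}

theorem transpose (hP : IsMPInv A P) : IsMPInv Aᵀ Pᵀ := by
  obtain ⟨h₁, h₂, h₃, h₄⟩ := hP
  refine ⟨?_, ?_, ?_, ?_⟩
  · rw [← transpose_mul, ← transpose_mul, ← Matrix.mul_assoc, h₁]
  · rw [← transpose_mul, ← transpose_mul, ← Matrix.mul_assoc, h₂]
  · rw [← transpose_mul, transpose_transpose, h₄]
  · rw [← transpose_mul, transpose_transpose, h₃]

theorem unique (hP : IsMPInv A P) (hQ : IsMPInv A Q) : P = Q := by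
  obtain ⟨hP₁, hP₂, hP₃, hP₄⟩ := hP
  obtain ⟨hQ₁, hQ₂, hQ₃, hQ₄⟩ := hQ
  have hP_eq : P = P * A * Q :=
    calc P = P * A * P := hP₂.symm
      _ = P * (A * Q * A * P)ᵀ := by rw [hQ₁, hP₃, Matrix.mul_assoc]
      _ = P * ((A * P)ᵀ * (A * Q)ᵀ) := by rw [Matrix.mul_assoc (A * Q), transpose_mul]
      _ = P * A * P * A * Q := by rw [hP₃, hQ₃]; simp only [Matrix.mul_assoc]
      _ = P * A * Q := by rw [hP₂]
  have hQ_eq : Q = P * A * Q :=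
    calc Q = Q * A * Q := hQ₂.symm
      _ = (Q * (A * P * A))ᵀ * Q := by rw [hP₁, hQ₄]
      _ = ((P * A)ᵀ * (Q * A)ᵀ) * Q := by rw [← transpose_mul]; simp only [Matrix.mul_assoc]
      _ = P * A * (Q * A * Q) := by rw [hP₄, hQ₄]; simp only [Matrix.mul_assoc]
      _ = P * A * Q := by rw [hQ₂]
  rw [hP_eq, ← hQ_eq]

theorem isSymm {A P : Matrix (Fin p) (Fin p) ℝ} (hP : IsMPInv A P) (hA : A.IsSymm) :
    P.IsSymm := by
  have hPt := hP.transpose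
  rw [hA.eq] at hPt
  exact hPt.unique hP

end IsMPInv

namespace Matrix

open scoped ComplexOrder

variable {l m n : Type*} [Fintype l] [Fintype m] [Fintype n]

theorem range_mulVecLin_le_iff_mul_mul_eq {R : Type*} [CommRing R] {A : Matrix m n R}
    {P : Matrix n m R} (hAPA : A * P * A = A) (B : Matrix m l R) :
    LinearMap.range B.mulVecLin ≤ LinearMap.range A.mulVecLin ↔ A * P * B = B := by
  refine ⟨fun h ↦ ext_iff_mulVec.mpr fun v ↦ ?_, fun h ↦ ?_⟩
  · obtain ⟨w, hw⟩ := h (LinearMap.mem_range_self _ v)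
    simp only [mulVecLin_apply] at hw
    rw [← mulVec_mulVec, ← hw, mulVec_mulVec, hAPA]
  · rintro _ ⟨v, rfl⟩
    exact ⟨(P * B) *ᵥ v, by simp [mulVec_mulVec, ← Matrix.mul_assoc, h]⟩

theorem fromBlocks_eq_transpose_mul_fromBlocks_zero_mul {R : Type*} [CommRing R]
    [DecidableEq m] [DecidableEq n] {A : Matrix m m R} {B : Matrix m n R} (C : Matrix n n R)
    {P : Matrix m m R} (hA : A.IsSymm) (hP : P.IsSymm) (hB : A * P * B = B) :
    fromBlocks A B Bᵀ C = (fromBlocks 1 (P * B) 0 1)ᵀ * fromBlocks A 0 0 (C - Bᵀ * P * B) *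
      fromBlocks 1 (P * B) 0 1 := by
  have hBt : Bᵀ * P * A = Bᵀ := by
    simpa [transpose_mul, hA.eq, hP.eq, Matrix.mul_assoc] using congrArg (·ᵀ) hB
  simp [fromBlocks_transpose, fromBlocks_multiply, hP.eq, hBt, ← Matrix.mul_assoc, hB]

theorem posSemidef_fromBlocks_zero_iff {𝕜 : Type*} [RCLike 𝕜] {A : Matrix m m 𝕜}
    {D : Matrix n n 𝕜} : (fromBlocks A 0 0 D).PosSemidef ↔ A.PosSemidef ∧ D.PosSemidef := by
  refine ⟨fun h ↦ ⟨toBlocks_fromBlocks₁₁ A 0 0 D ▸ h.submatrix Sum.inl,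
    toBlocks_fromBlocks₂₂ A 0 0 D ▸ h.submatrix Sum.inr⟩,
    fun ⟨hA, hD⟩ ↦ .of_dotProduct_mulVec_nonneg (hA.1.fromBlocks (by simp) hD.1) fun v ↦ ?_⟩
  obtain ⟨x, y, rfl⟩ : ∃ x y, v = Sum.elim x y := ⟨_, _, (Sum.elim_comp_inl_inr v).symm⟩
  simpa [fromBlocks_mulVec, Function.star_sumElim, sumElim_dotProduct_sumElim] using
    add_nonneg (hA.dotProduct_mulVec_nonneg x) (hD.dotProduct_mulVec_nonneg y)

theorem PosSemidef.conjTranspose_mulVec_eq_zero_of_fromBlocks {𝕜 : Type*} [RCLike 𝕜]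
    {A : Matrix m m 𝕜} {B : Matrix m n 𝕜} {C : Matrix n n 𝕜}
    (hM : (fromBlocks A B Bᴴ C).PosSemidef) {x : m → 𝕜} (hx : A *ᵥ x = 0) : Bᴴ *ᵥ x = 0 := by
  have hMx := (hM.dotProduct_mulVec_zero_iff (Sum.elim x 0)).mp (by
    simp [fromBlocks_mulVec, hx, Function.star_sumElim, sumElim_dotProduct_sumElim])
  funext i
  simpa [fromBlocks_mulVec, hx] using congrFun hMx (Sum.inr i)

theorem PosSemidef.mul_mul_eq_of_fromBlocks {A : Matrix m m ℝ} {B : Matrix m n ℝ}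
    {C : Matrix n n ℝ} {P : Matrix m m ℝ} (hM : (fromBlocks A B Bᵀ C).PosSemidef)
    (hA : A.IsSymm) (hP : P.IsSymm) (hAPA : A * P * A = A) : A * P * B = B := by
  rw [← conjTranspose_eq_transpose_of_trivial] at hM
  have hBt : Bᵀ * (P * A) = Bᵀ := ext_iff_mulVec.mpr fun v ↦ by
    have hker : A *ᵥ (v - (P * A) *ᵥ v) = 0 := by
      rw [mulVec_sub, mulVec_mulVec, ← Matrix.mul_assoc, hAPA, sub_self]
    have hBv := hM.conjTranspose_mulVec_eq_zero_of_fromBlocks hker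
    rwa [conjTranspose_eq_transpose_of_trivial, mulVec_sub, sub_eq_zero, mulVec_mulVec,
      eq_comm] at hBv
  simpa [transpose_mul, hA.eq, hP.eq, Matrix.mul_assoc] using congrArg (·ᵀ) hBt

theorem posSemidef_fromBlocks_iff_of_mul_mul_eq [DecidableEq m] [DecidableEq n]
    {A : Matrix m m ℝ} {B : Matrix m n ℝ} (C : Matrix n n ℝ) {P : Matrix m m ℝ}
    (hA : A.IsSymm) (hP : P.IsSymm) (hB : A * P * B = B) :
    (fromBlocks A B Bᵀ C).PosSemidef ↔ A.PosSemidef ∧ (C - Bᵀ * P * B).PosSemidef := by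
  have hL : IsUnit (fromBlocks 1 (P * B) 0 1 : Matrix (m ⊕ n) (m ⊕ n) ℝ) :=
    isUnit_fromBlocks_zero₂₁.mpr ⟨isUnit_one, isUnit_one⟩
  rw [fromBlocks_eq_transpose_mul_fromBlocks_zero_mul C hA hP hB, ← posSemidef_fromBlocks_zero_iff,
    ← conjTranspose_eq_transpose_of_trivial (fromBlocks 1 (P * B) 0 1)]
  exact hL.posSemidef_star_left_conjugate_iff

end Matrix

theorem posSemidef_iff_schur_general {p q : ℕ}
    (A : Matrix (Fin p) (Fin p) ℝ) (B : Matrix (Fin p) (Fin q) ℝ)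
    (C : Matrix (Fin q) (Fin q) ℝ)
    (hA : A.IsSymm)
    (Ap : Matrix (Fin p) (Fin p) ℝ) (hAp : IsMPInv A Ap) :
    (fromBlocks A B Bᵀ C).PosSemidef ↔
      A.PosSemidef ∧ LinearMap.range B.mulVecLin ≤ LinearMap.range A.mulVecLin ∧
        (C - Bᵀ * Ap * B).PosSemidef := by
  have hAp_symm := hAp.isSymm hA
  rw [range_mulVecLin_le_iff_mul_mul_eq hAp.1]
  constructor
  · intro hM
    have hB := hM.mul_mul_eq_of_fromBlocks hA hAp_symm hAp.1
    obtain ⟨hA_psd, hS⟩ := (posSemidef_fromBlocks_iff_of_mul_mul_eq C hA hAp_symm hB).mp hM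
    exact ⟨hA_psd, hB, hS⟩
  · rintro ⟨hA_psd, hB, hS⟩
    exact (posSemidef_fromBlocks_iff_of_mul_mul_eq C hA hAp_symm hB).mpr ⟨hA_psd, hS⟩

/-- PSD characterization via the generalized Schur complement. -/
theorem posSemidef_iff_schur {p q : ℕ}
    (A : Matrix (Fin p) (Fin p) ℝ) (B : Matrix (Fin p) (Fin q) ℝ)
    (C : Matrix (Fin q) (Fin q) ℝ)
    (hA : A.IsSymm) (hC : C.IsSymm)
    (Ap : Matrix (Fin p) (Fin p) ℝ) (hAp : IsMPInv A Ap) :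
    (fromBlocks A B Bᵀ C).PosSemidef ↔
      A.PosSemidef ∧ LinearMap.range B.mulVecLin ≤ LinearMap.range A.mulVecLin ∧
        (C - Bᵀ * Ap * B).PosSemidef :=
  posSemidef_iff_schur_general A B C hA Ap hAp
end

section
/- Let M = [[A, B], [Bᵀ, C]] be a real positive semidefinite matrix of rank r with A, C square and A, B fixed. If rank(A) < r, then there exists C' ≠ C such that [[A, B], [Bᵀ, C']] is positive semidefinite of rank r. Hence the PSD completion is not unique. -/
/-!
Factor `M = Uᵀ U`, split the columns of `U` as `[U₁ | U₂]` and write `U₂ = U₁ X + W` with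
`U₁ᵀ W = 0` (`W` is the least-squares residual of `U₂ ≈ U₁ X`). Replacing `W` by `c • W` with
`c ≠ 0` is an invertible column operation, so it keeps the rank, and it keeps `A = U₁ᵀ U₁` and
`B = U₁ᵀ U₁ X`, while it changes `C` by `(c² - 1) Wᵀ W`. If `W = 0` then
`rank M = rank U₁ = rank A`; so `W ≠ 0` and `c = 2` gives a second completion.
-/

open Matrix

namespace Matrix

section LinearOrderedField

variable {R m n k : Type*} [Field R] [LinearOrder R] [IsStrictOrderedRing R]
  [Fintype m] [Fintype n]

theorem range_mulVecLin_transpose_mul_self (U : Matrix m n R) :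
    LinearMap.range (Uᵀ * U).mulVecLin = LinearMap.range Uᵀ.mulVecLin := by
  refine Submodule.eq_of_le_of_finrank_le ?_ ?_
  · rintro _ ⟨x, rfl⟩
    exact ⟨U *ᵥ x, by simp⟩
  · exact ((rank_transpose_mul_self U).trans (rank_transpose U).symm).ge

theorem exists_transpose_mul_self_mul_eq (U : Matrix m n R) (V : Matrix m k R) :
    ∃ X : Matrix n k R, Uᵀ * U * X = Uᵀ * V := by
  have hcol (j : k) : ∃ x : n → R, (Uᵀ * U) *ᵥ x = (Uᵀ * V).col j := by
    have hmem : (Uᵀ * V).col j ∈ LinearMap.range Uᵀ.mulVecLin := ⟨V.col j, rfl⟩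
    rwa [← range_mulVecLin_transpose_mul_self] at hmem
  choose x hx using hcol
  exact ⟨(of x)ᵀ, by ext i j; exact congrFun (hx j) i⟩

theorem exists_eq_mul_add_and_transpose_mul_eq_zero (U : Matrix m n R) (V : Matrix m k R) :
    ∃ (X : Matrix n k R) (W : Matrix m k R), V = U * X + W ∧ Uᵀ * W = 0 := by
  obtain ⟨X, hX⟩ := exists_transpose_mul_self_mul_eq U V
  exact ⟨X, V - U * X, by abel, by rw [Matrix.mul_sub, ← Matrix.mul_assoc, hX, sub_self]⟩

end LinearOrderedField

section Field

variable {R m n k : Type*} [Field R] [Fintype n] [Fintype k]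

theorem rank_fromCols_mul_add_smul (U : Matrix m n R) (X : Matrix n k R) (W : Matrix m k R)
    {c : R} (hc : c ≠ 0) : (fromCols U (U * X + c • W)).rank = (fromCols U W).rank := by
  classical
  set T : Matrix (n ⊕ k) (n ⊕ k) R := fromBlocks 1 X 0 (c • 1)
  have hT : IsUnit T.det := by
    rw [det_fromBlocks_zero₂₁, det_one, one_mul, det_smul, det_one, mul_one]
    exact hc.isUnit.pow _
  have hfactor : fromCols U (U * X + c • W) = fromCols U W * T := by
    simp [T, fromCols_mul_fromBlocks]
  rw [hfactor, rank_mul_eq_left_of_isUnit_det _ _ hT]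

theorem rank_fromCols_mul_le (U : Matrix m n R) (X : Matrix n k R) :
    (fromCols U (U * X)).rank ≤ U.rank := by
  classical
  calc (fromCols U (U * X)).rank = (U * fromCols 1 X).rank := by rw [mul_fromCols, Matrix.mul_one]
    _ ≤ U.rank := rank_mul_le_left _ _

end Field

theorem transpose_mul_self_fromCols_mul_add_smul {R m n k : Type*} [CommRing R]
    [Fintype m] [Fintype n]
    (U : Matrix m n R) (X : Matrix n k R) (W : Matrix m k R) (c : R) (hW : Uᵀ * W = 0) :
    (fromCols U (U * X + c • W))ᵀ * fromCols U (U * X + c • W) =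
      fromBlocks (Uᵀ * U) (Uᵀ * U * X) (Uᵀ * U * X)ᵀ (Xᵀ * (Uᵀ * U) * X + (c * c) • (Wᵀ * W)) := by
  have hW' : Wᵀ * U = 0 := by rw [← transpose_transpose U, ← transpose_mul, hW, transpose_zero]
  have hXW : Xᵀ * Uᵀ * W = 0 := by rw [Matrix.mul_assoc, hW, Matrix.mul_zero]
  rw [transpose_fromCols, fromRows_mul_fromCols]
  simp [Matrix.mul_add, Matrix.add_mul, hW, hW', hXW, transpose_mul, ← Matrix.mul_assoc, mul_smul]

theorem PosSemidef.exists_eq_transpose_mul_self {n : Type*} [Fintype n]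
    {M : Matrix n n ℝ} (hM : M.PosSemidef) : ∃ U : Matrix n n ℝ, M = Uᵀ * U := by
  classical
  open scoped MatrixOrder in
  obtain ⟨U, hU⟩ := CStarAlgebra.nonneg_iff_eq_star_mul_self.mp hM.nonneg
  exact ⟨U, by rw [hU, star_eq_conjTranspose, conjTranspose_eq_transpose_of_trivial]⟩

end Matrix

/-- PSD completion: if `rank A < r = rank M`, the PSD completion is not unique. -/
theorem psd_nonunique_completion_of_rank_lt {p q r : ℕ}
    (A : Matrix (Fin p) (Fin p) ℝ) (B : Matrix (Fin p) (Fin q) ℝ)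
    (C : Matrix (Fin q) (Fin q) ℝ)
    (hPSD : (fromBlocks A B Bᵀ C).PosSemidef)
    (hM : (fromBlocks A B Bᵀ C).rank = r) (hA : A.rank < r) :
    ∃ C' : Matrix (Fin q) (Fin q) ℝ, C' ≠ C ∧ (fromBlocks A B Bᵀ C').PosSemidef ∧
      (fromBlocks A B Bᵀ C').rank = r := by
  obtain ⟨U, hMU⟩ := hPSD.exists_eq_transpose_mul_self
  have hUr : U.rank = r := by rw [← rank_transpose_mul_self, ← hMU, hM]
  obtain ⟨X, W, hU₂, hW⟩ := exists_eq_mul_add_and_transpose_mul_eq_zero U.toCols₁ U.toCols₂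
  set U₁ := U.toCols₁
  set V : ℝ → Matrix (Fin p ⊕ Fin q) (Fin p ⊕ Fin q) ℝ := fun c ↦ fromCols U₁ (U₁ * X + c • W)
  have hUV : U = V 1 := by
    rw [show V 1 = fromCols U₁ (U₁ * X + W) by simp [V], ← hU₂, fromCols_toCols]
  have hVr (c : ℝ) (hc : c ≠ 0) : (V c).rank = r := by
    rw [← hUr, hUV]
    exact (rank_fromCols_mul_add_smul _ _ _ hc).trans
      (rank_fromCols_mul_add_smul _ _ _ one_ne_zero).symm
  rw [hUV, transpose_mul_self_fromCols_mul_add_smul _ _ _ _ hW] at hMU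
  obtain ⟨rfl, rfl, -, rfl⟩ := fromBlocks_inj.mp hMU
  have hW0 : W ≠ 0 := by
    rintro rfl
    have hr : r ≤ (U₁ᵀ * U₁).rank :=
      calc r = (V 1).rank := (hVr 1 one_ne_zero).symm
        _ ≤ U₁.rank := by simpa [V] using rank_fromCols_mul_le U₁ X
        _ = (U₁ᵀ * U₁).rank := (rank_transpose_mul_self U₁).symm
    exact hA.not_ge hr
  refine ⟨Xᵀ * (U₁ᵀ * U₁) * X + (2 * 2 : ℝ) • (Wᵀ * W), ?_, ?_, ?_⟩
  · intro h
    have h3 : (2 * 2 - 1 * 1 : ℝ) • (Wᵀ * W) = 0 := by rw [sub_smul, add_left_cancel h, sub_self]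
    refine hW0 (conjTranspose_mul_self_eq_zero.mp ?_)
    rw [conjTranspose_eq_transpose_of_trivial]
    exact (smul_eq_zero.mp h3).resolve_left (by norm_num)
  · rw [← transpose_mul_self_fromCols_mul_add_smul _ _ _ _ hW]
    exact conjTranspose_eq_transpose_of_trivial (V 2) ▸ posSemidef_conjTranspose_mul_self (V 2)
  · rw [← transpose_mul_self_fromCols_mul_add_smul _ _ _ _ hW, rank_transpose_mul_self]
    exact hVr 2 two_ne_zero
end

section
/- There exists a rank-2 positive semidefinite 3×3 matrix M = [[A, B, D], [Bᵀ, C, E], [Dᵀ, Eᵀ, F]] (with all 1×1 blocks) whose blocks A, B, C, E, F are fixed, such that rank(C) = 1 < 2 = rank(M) yet D is uniquely determined among all PSD rank-≤2 completions. Concretely, M = [[5, 4, -2], [4, 16, -8], [-2, -8, 4]] with C = 16: the only value of D giving a rank-2 PSD matrix is D = -2. -/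
open Matrix

lemma transpose_eq :
    (!![(1 : ℝ), 4, -2; 2, 0, 0])ᵀ = !![(1 : ℝ), 2; 4, 0; -2, 0] := by
  ext i j
  fin_cases i <;> fin_cases j <;> simp [Matrix.transpose_apply, Matrix.vecHead, Matrix.vecTail]

lemma factor_eq :
    (!![(5 : ℝ), 4, -2; 4, 16, -8; -2, -8, 4]) =
      (!![(1 : ℝ), 4, -2; 2, 0, 0])ᵀ * !![(1 : ℝ), 4, -2; 2, 0, 0] := by
  rw [transpose_eq]
  ext i j
  fin_cases i <;> fin_cases j <;>
    simp [Matrix.mul_apply, Fin.sum_univ_two] <;> norm_num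

lemma my_det_nonneg {n : Type*} [Fintype n] [DecidableEq n] {M : Matrix n n ℝ}
    (hM : M.PosSemidef) : 0 ≤ M.det := by
  rw [hM.isHermitian.det_eq_prod_eigenvalues]
  exact Finset.prod_nonneg fun i _ => hM.eigenvalues_nonneg i

/-- Converse of the PSD two-clique uniqueness criterion fails:
`M = [[5,4,-2],[4,16,-8],[-2,-8,4]]` is PSD of rank 2, the overlap block `[[16]]`
has rank `1 < 2`, yet the missing corner entry is uniquely determined: the only
value `d` giving a PSD matrix of rank `≤ 2` is `d = -2`. -/
theorem psd_converse_fails :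
    (!![(5 : ℝ), 4, -2; 4, 16, -8; -2, -8, 4]).PosSemidef ∧
    (!![(5 : ℝ), 4, -2; 4, 16, -8; -2, -8, 4]).rank = 2 ∧
    (!![(16 : ℝ)]).rank = 1 ∧
    (∀ d : ℝ, (!![5, 4, d; 4, 16, -8; d, -8, 4]).PosSemidef →
      (!![(5 : ℝ), 4, d; 4, 16, -8; d, -8, 4]).rank ≤ 2 → d = -2) := by
  refine ⟨?_, ?_, ?_, ?_⟩
  · rw [factor_eq]
    have := Matrix.posSemidef_conjTranspose_mul_self (!![(1 : ℝ), 4, -2; 2, 0, 0])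
    simpa using this
  · rw [factor_eq]
    have h1 : ((!![(1 : ℝ), 4, -2; 2, 0, 0])ᵀ * !![(1 : ℝ), 4, -2; 2, 0, 0]).rank
        = (!![(1 : ℝ), 4, -2; 2, 0, 0]).rank :=
      Matrix.rank_transpose_mul_self _
    have h2 : (!![(1 : ℝ), 4, -2; 2, 0, 0]).rank
        = (!![(1 : ℝ), 4, -2; 2, 0, 0] * (!![(1 : ℝ), 4, -2; 2, 0, 0])ᵀ).rank :=
      (Matrix.rank_self_mul_transpose _).symm
    have h3 : (!![(1 : ℝ), 4, -2; 2, 0, 0] * (!![(1 : ℝ), 4, -2; 2, 0, 0])ᵀ)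
        = !![(21 : ℝ), 2; 2, 4] := by
      rw [transpose_eq]
      ext i j
      fin_cases i <;> fin_cases j <;>
        simp [Matrix.mul_apply, Fin.sum_univ_three, Matrix.vecHead, Matrix.vecTail] <;> norm_num
    have hu : IsUnit (!![(21 : ℝ), 2; 2, 4]) := by
      rw [Matrix.isUnit_iff_isUnit_det]
      simp [Matrix.det_fin_two_of]
      norm_num
    rw [h1, h2, h3, Matrix.rank_of_isUnit _ hu]
    simp
  · have hu : IsUnit (!![(16 : ℝ)]) := by
      rw [Matrix.isUnit_iff_isUnit_det]
      simp
    rw [Matrix.rank_of_isUnit _ hu]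
    simp
  · intro d hpsd _
    have hdet := my_det_nonneg hpsd
    rw [Matrix.det_fin_three] at hdet
    simp at hdet
    nlinarith [sq_nonneg (d + 2)]
end

section
/- Let G be a graph whose edge set is a union of edge sets E₁, …, E_l of a chain of cliques α₁, …, α_l satisfying: E_i ∩ E_j = ∅ whenever j ≥ i + 2, and consecutive cliques overlap according to the staircase intersection conditions (α_i ∩ α_{i+2} = α_{i+1} restricted appropriately). Then G is a chordal graph, and the path α₁ — α₂ — ⋯ — α_l is its unique clique tree with the induced subtree property. -/
open SimpleGraph

/-- A cycle `w` in `G` has a chord: an edge of `G` between two vertices of the cycle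
which is not an edge of the cycle. -/
def HasChord {V : Type*} (G : SimpleGraph V) {v : V} (w : G.Walk v v) : Prop :=
  ∃ a b, a ∈ w.support ∧ b ∈ w.support ∧ G.Adj a b ∧ ¬ w.toSubgraph.Adj a b

/-- A graph is chordal if every cycle of length greater than three has a chord. -/
def Chordal {V : Type*} (G : SimpleGraph V) : Prop :=
  ∀ ⦃v : V⦄ (w : G.Walk v v), w.IsCycle → 3 < w.length → HasChord G w

/-- A tree `T` on the index set of the cliques `α` has the induced subtree property:
for every vertex `v`, the cliques containing `v` form a connected subgraph of `T`. -/
def InducedSubtreeProperty {V : Type*} {l : ℕ} (T : SimpleGraph (Fin l))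
    (α : Fin l → Finset V) : Prop :=
  ∀ (v : V) (i j : Fin l) (hi : i ∈ {k | v ∈ α k}) (hj : j ∈ {k | v ∈ α k}),
    (T.induce {k | v ∈ α k}).Reachable ⟨i, hi⟩ ⟨j, hj⟩

/-!
The cliques containing a vertex form a run of consecutive indices, so `G` is an interval graph.
In any finite vertex set, a vertex `y` whose last clique `m` comes earliest is simplicial: each
neighbour shares a clique `i ≤ m` with `y` and has its own last clique at or after `m`, so it lies
in `α m`. A vertex of a long cycle whose two cycle-neighbours are adjacent yields a chord.

A vertex lying in exactly the cliques `i` and `i + 1` forces the edge `i — i + 1` in any tree with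
the induced subtree property, so such a tree contains the path; a tree is a minimal connected graph,
so it is the path.
-/

namespace SimpleGraph.Walk.IsCycle

variable {V : Type*} {G : SimpleGraph V} {u : V} {c : G.Walk u u}

lemma not_adj_snd_penultimate (hc : c.IsCycle) (hlen : 3 < c.length) :
    ¬ c.toSubgraph.Adj c.snd c.penultimate := by
  intro h
  have hmem : c.penultimate ∈ c.toSubgraph.neighborSet (c.getVert 1) := h
  rw [hc.neighborSet_toSubgraph_internal one_ne_zero (by omega)] at hmem
  rcases hmem with h0 | h2
  · have := (hc.getVert_endpoint_iff (i := c.length - 1) (by omega)).1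
      (by simpa using h0)
    omega
  · have := hc.getVert_injOn (by simp only [Set.mem_ofPred_eq]; omega)
      (by simp only [Set.mem_ofPred_eq]; omega) h2
    omega

lemma not_adj_of_adj_of_adj (hc : c.IsCycle) (hlen : 3 < c.length) {x y z : V}
    (hx : c.toSubgraph.Adj y x) (hz : c.toSubgraph.Adj y z) (hxz : x ≠ z) :
    ¬ c.toSubgraph.Adj x z := by
  classical
  have hy : y ∈ c.support := c.mem_support_of_adj_toSubgraph hx
  have hc' : (c.rotate y hy).IsCycle := hc.rotate hy
  have hlen' : 3 < (c.rotate y hy).length := by rwa [length_rotate]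
  have hnb : c.toSubgraph.neighborSet y =
      {(c.rotate y hy).snd, (c.rotate y hy).penultimate} := by
    rw [← toSubgraph_rotate c hy, hc'.neighborSet_toSubgraph_endpoint]
  have hx' : x ∈ c.toSubgraph.neighborSet y := hx
  have hz' : z ∈ c.toSubgraph.neighborSet y := hz
  rw [hnb] at hx' hz'
  rw [← toSubgraph_rotate c hy]
  rcases hx' with rfl | rfl <;> rcases hz' with rfl | rfl
  · exact absurd rfl hxz
  · exact hc'.not_adj_snd_penultimate hlen'
  · exact fun h => hc'.not_adj_snd_penultimate hlen' h.symm
  · exact absurd rfl hxz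

end SimpleGraph.Walk.IsCycle

lemma chordal_of_forall_exists_isClique_neighborSet_inter {V : Type*} {G : SimpleGraph V}
    (h : ∀ s : Finset V, s.Nonempty → ∃ y ∈ s, G.IsClique (G.neighborSet y ∩ s)) :
    Chordal G := by
  classical
  intro u c hc hlen
  obtain ⟨y, hy, hclique⟩ := h c.support.toFinset ⟨u, by simp⟩
  rw [List.mem_toFinset] at hy
  obtain ⟨x, z, hxz, hnb⟩ := Set.ncard_eq_two.1 (hc.ncard_neighborSet_toSubgraph_eq_two hy)
  have hx : c.toSubgraph.Adj y x := by simp [← Subgraph.mem_neighborSet, hnb]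
  have hz : c.toSubgraph.Adj y z := by simp [← Subgraph.mem_neighborSet, hnb]
  have hxs := c.mem_support_of_adj_toSubgraph hx.symm
  have hzs := c.mem_support_of_adj_toSubgraph hz.symm
  refine ⟨x, z, hxs, hzs, hclique ⟨hx.adj_sub, by simpa⟩ ⟨hz.adj_sub, by simpa⟩ hxz,
    hc.not_adj_of_adj_of_adj hlen hx hz hxz⟩

lemma exists_isClique_neighborSet_inter {ι V : Type*} [LinearOrder ι] [Fintype ι]
    {G : SimpleGraph V} {α : ι → Finset V}
    (hadj : ∀ u v : V, G.Adj u v ↔ u ≠ v ∧ ∃ i, u ∈ α i ∧ v ∈ α i)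
    (hconv : ∀ v, {i | v ∈ α i}.OrdConnected) (s : Finset V) (hs : s.Nonempty) :
    ∃ y ∈ s, G.IsClique (G.neighborSet y ∩ s) := by
  classical
  -- `⊥` exactly for the vertices in no clique, which have no neighbours.
  let last : V → WithBot ι := fun v => (Finset.univ.filter (v ∈ α ·)).max
  obtain ⟨y, hy, hmin⟩ := s.exists_min_image last hs
  refine ⟨y, hy, ?_⟩
  have mem_last : ∀ x ∈ G.neighborSet y ∩ s, ∃ m : ι, last y = m ∧ x ∈ α m := by
    rintro x ⟨hyx, hx⟩
    obtain ⟨-, i, hyi, hxi⟩ := (hadj y x).1 hyx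
    have hi : i ∈ Finset.univ.filter (y ∈ α ·) := by simpa using hyi
    obtain ⟨m, hm⟩ := Finset.max_of_mem hi
    have hxi' : i ∈ Finset.univ.filter (x ∈ α ·) := by simpa using hxi
    obtain ⟨m', hm'⟩ := Finset.max_of_mem hxi'
    have hmm' : m ≤ m' := WithBot.coe_le_coe.1 (hm ▸ hm' ▸ hmin x hx)
    have him : i ≤ m := Finset.le_max_of_eq hi hm
    have hxm' : x ∈ α m' := by simpa using Finset.mem_of_max hm'
    exact ⟨m, hm, (hconv x).out hxi hxm' ⟨him, hmm'⟩⟩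
  intro x hx z hz hxz
  obtain ⟨m, hm, hxm⟩ := mem_last x hx
  obtain ⟨m', hm', hzm⟩ := mem_last z hz
  obtain rfl : m = m' := WithBot.coe_injective (hm.symm.trans hm')
  exact (hadj x z).2 ⟨hxz, m, hxm, hzm⟩

lemma chordal_of_ordConnected {ι V : Type*} [LinearOrder ι] [Fintype ι]
    {G : SimpleGraph V} {α : ι → Finset V}
    (hadj : ∀ u v : V, G.Adj u v ↔ u ≠ v ∧ ∃ i, u ∈ α i ∧ v ∈ α i)
    (hconv : ∀ v, {i | v ∈ α i}.OrdConnected) : Chordal G :=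
  chordal_of_forall_exists_isClique_neighborSet_inter
    (exists_isClique_neighborSet_inter hadj hconv)

section Chain

variable {V : Type*} {l : ℕ} {α : Fin l → Finset V}

lemma ordConnected_of_chain
    (hchain : ∀ (v : V) (i j : Fin l), v ∈ α i → v ∈ α j → i ≤ j → (j : ℕ) ≤ (i : ℕ) + 1)
    (v : V) : {i | v ∈ α i}.OrdConnected := by
  refine ⟨fun i hi k hk j ⟨hij, hjk⟩ => ?_⟩
  have := hchain v i k hi hk (hij.trans hjk)
  obtain rfl | rfl : j = i ∨ j = k := by omega
  exacts [hi, hk]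

lemma inducedSubtreeProperty_pathGraph
    (hchain : ∀ (v : V) (i j : Fin l), v ∈ α i → v ∈ α j → i ≤ j → (j : ℕ) ≤ (i : ℕ) + 1) :
    InducedSubtreeProperty (pathGraph l) α := by
  suffices h : ∀ v (i j : Fin l) (hi : v ∈ α i) (hj : v ∈ α j), i < j →
      ((pathGraph l).induce {k | v ∈ α k}).Adj ⟨i, hi⟩ ⟨j, hj⟩ by
    intro v i j hi hj
    rcases lt_trichotomy i j with hij | rfl | hji
    · exact (h v i j hi hj hij).reachable
    · rfl
    · exact (h v j i hj hi hji).reachable.symm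
  intro v i j hi hj hij
  have := hchain v i j hi hj hij.le
  change (pathGraph l).Adj i j
  exact pathGraph_adj.2 (Or.inl (by omega))

lemma InducedSubtreeProperty.adj {T : SimpleGraph (Fin l)} (hT : InducedSubtreeProperty T α)
    {v : V} {i j : Fin l} (hi : v ∈ α i) (hj : v ∈ α j) (hij : i ≠ j)
    (honly : ∀ k, v ∈ α k → k = i ∨ k = j) : T.Adj i j := by
  obtain ⟨p⟩ := hT v i j hi hj
  cases p with
  | nil => exact absurd rfl hij
  | @cons _ k _ hk _ =>
    obtain rfl | rfl := honly k k.2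
    · exact absurd rfl hk.ne'
    · exact hk

lemma pathGraph_le_of_inducedSubtreeProperty [DecidableEq V]
    (hchain : ∀ (v : V) (i j : Fin l), v ∈ α i → v ∈ α j → i ≤ j → (j : ℕ) ≤ (i : ℕ) + 1)
    (hconsec : ∀ i j : Fin l, (i : ℕ) + 1 = (j : ℕ) → ((α i) ∩ (α j)).Nonempty)
    {T : SimpleGraph (Fin l)} (hT : InducedSubtreeProperty T α) : pathGraph l ≤ T := by
  suffices h : ∀ i j : Fin l, (i : ℕ) + 1 = j → T.Adj i j by
    intro i j hij
    rcases pathGraph_adj.1 hij with hij | hji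
    exacts [h i j hij, (h j i hji).symm]
  intro i j hij
  obtain ⟨v, hv⟩ := hconsec i j hij
  rw [Finset.mem_inter] at hv
  refine hT.adj hv.1 hv.2 (by omega) fun k hk => ?_
  rcases le_or_gt k i with hki | hik
  · have := hchain v k j hk hv.2 (by omega)
    omega
  · have := hchain v i k hv.1 hk hik.le
    omega

end Chain

theorem chain_of_cliques_chordal_unique_clique_tree_general {V : Type*} [DecidableEq V]
    {l : ℕ} (G : SimpleGraph V) (α : Fin l → Finset V)
    (hadj : ∀ u v : V, G.Adj u v ↔ u ≠ v ∧ ∃ i, u ∈ α i ∧ v ∈ α i)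
    (hchain : ∀ (v : V) (i j : Fin l), v ∈ α i → v ∈ α j → i ≤ j → (j : ℕ) ≤ (i : ℕ) + 1)
    (hconsec : ∀ i j : Fin l, (i : ℕ) + 1 = (j : ℕ) → ((α i) ∩ (α j)).Nonempty) :
    Chordal G ∧
      InducedSubtreeProperty (pathGraph l) α ∧
      ∀ T : SimpleGraph (Fin l), T.IsTree → InducedSubtreeProperty T α →
        T = pathGraph l := by
  refine ⟨chordal_of_ordConnected hadj (ordConnected_of_chain hchain),
    inducedSubtreeProperty_pathGraph hchain, fun T hT hTisp => ?_⟩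
  have : Nonempty (Fin l) := hT.connected.nonempty
  have hpath : (pathGraph l).Connected := ⟨pathGraph_preconnected l⟩
  exact ((isTree_iff_minimal_connected.1 hT).eq_of_le hpath
    (pathGraph_le_of_inducedSubtreeProperty hchain hconsec hTisp)).symm

/-- A graph whose edges are covered by a chain of cliques (with nonconsecutive cliques
intersecting only inside the intermediate one, so every vertex lies in at most two
consecutive cliques, and consecutive cliques overlapping) is chordal, and the path
`α₁ — α₂ — ⋯ — α_l` is its unique clique tree with the induced subtree property. -/
theorem chain_of_cliques_chordal_unique_clique_tree {V : Type*} [Fintype V] [DecidableEq V]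
    {l : ℕ} (hl : 1 ≤ l) (G : SimpleGraph V) (α : Fin l → Finset V)
    (hadj : ∀ u v : V, G.Adj u v ↔ u ≠ v ∧ ∃ i, u ∈ α i ∧ v ∈ α i)
    (hcover : ∀ v : V, ∃ i, v ∈ α i)
    (hchain : ∀ (v : V) (i j : Fin l), v ∈ α i → v ∈ α j → i ≤ j → (j : ℕ) ≤ (i : ℕ) + 1)
    (hconsec : ∀ i j : Fin l, (i : ℕ) + 1 = (j : ℕ) → ((α i) ∩ (α j)).Nonempty) :
    Chordal G ∧
      InducedSubtreeProperty (pathGraph l) α ∧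
      ∀ T : SimpleGraph (Fin l), T.IsTree → InducedSubtreeProperty T α →
        T = pathGraph l :=
  chain_of_cliques_chordal_unique_clique_tree_general G α hadj hchain hconsec
end
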